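/- arXiv:1708.06322 — 4 statements merged into one kernel-verified Lean document; each statement's English description precedes it below -/
import Mathlib

section
/- Let φ : ℝ → ℝ be smooth and 2π-periodic and let u ∈ 𝓗 be smooth. Then ⟨A_φ u, u⟩ ≤ -(1/2)‖u_xx‖² + (9/2)‖φ_xx‖_∞² ‖u‖², and consequently ⟨A_φ u, u⟩ ≤ (-(1/2) + (9/2)‖φ_xx‖_∞²) ‖u‖². -/
open MeasureTheory Real Filter

/-- The L² norm on [0,2π]. -/
noncomputable def L2norm (f : ℝ → ℝ) : ℝ :=
  Real.sqrt (∫ x in (0:ℝ)..(2*Real.pi), (f x)^2)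

/-- The L² inner product on [0,2π]. -/
noncomputable def L2inner (f g : ℝ → ℝ) : ℝ :=
  ∫ x in (0:ℝ)..(2*Real.pi), f x * g x

/-- The supremum norm on [0,2π]. -/
noncomputable def supNorm (f : ℝ → ℝ) : ℝ :=
  sSup ((fun x => |f x|) '' Set.Icc (0:ℝ) (2*Real.pi))

/-- The operator A_φ u = -∂_x⁴ u - 2 ∂_x³ (φ_x u). -/
noncomputable def Aop (φ u : ℝ → ℝ) : ℝ → ℝ :=
  fun x => -(iteratedDeriv 4 u x) - 2 * iteratedDeriv 3 (fun y => deriv φ y * u y) x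

/-- Membership in 𝓗 (smooth part): smooth, 2π-periodic, zero mean on [0,2π]. -/
def InH (u : ℝ → ℝ) : Prop :=
  ContDiff ℝ (⊤ : ℕ∞) u ∧ Function.Periodic u (2*Real.pi) ∧
    (∫ x in (0:ℝ)..(2*Real.pi), u x) = 0

/-- Membership in H_n: real trigonometric polynomials spanned by e^{ikx}, 1 ≤ |k| ≤ n. -/
def InHn (n : ℕ) (p : ℝ → ℝ) : Prop :=
  ∃ a b : ℕ → ℝ,
    p = fun x => ∑ k ∈ Finset.Icc 1 n, (a k * Real.cos (k*x) + b k * Real.sin (k*x))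

/-- λ_n(φ) = sup { ⟨A_φ p, p⟩ : p ∈ H_n, ‖p‖ = 1 }. -/
noncomputable def lamN (n : ℕ) (φ : ℝ → ℝ) : ℝ :=
  sSup {r : ℝ | ∃ p : ℝ → ℝ, InHn n p ∧ L2norm p = 1 ∧ r = L2inner (Aop φ p) p}

/-- λ(φ) = sup { ⟨A_φ u, u⟩ : u smooth in 𝓗, ‖u‖ = 1 }. -/
noncomputable def lam (φ : ℝ → ℝ) : ℝ :=
  sSup {r : ℝ | ∃ u : ℝ → ℝ, InH u ∧ L2norm u = 1 ∧ r = L2inner (Aop φ u) u}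

/-- All Fourier coefficients ĉ_k of q vanish for |k| ≤ n. -/
def HighModes (n : ℕ) (q : ℝ → ℝ) : Prop :=
  ∀ k : ℤ, |k| ≤ (n : ℤ) →
    (∫ x in (0:ℝ)..(2*Real.pi), (q x : ℂ) * Complex.exp (-Complex.I * (k:ℂ) * (x:ℂ))) = 0

section Stmt0Aux

open MeasureTheory Real Filter Function intervalIntegral Set

noncomputable section


local notation "T" => 2*Real.pi
local notation "SM" => ContDiff ℝ (↑(⊤:ℕ∞))

lemma hT0 : (0:ℝ) < T := by positivity

lemma one_le_inf : (1 : WithTop ℕ∞) ≤ ↑(⊤:ℕ∞) := by exact_mod_cast le_top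

lemma smooth_iD {f : ℝ → ℝ} (hf : SM f) (n : ℕ) :
    SM (iteratedDeriv n f) := by
  have := hf.iterate_deriv n (f := f)
  simpa [iteratedDeriv_eq_iterate] using this

lemma periodic_deriv' {f : ℝ → ℝ} (hf : SM f) (hp : Periodic f T) :
    Periodic (deriv f) T := by
  intro x
  have : deriv (fun y => f (y + T)) x = deriv f (x + T) := deriv_comp_add_const f T x
  rw [← this]
  congr 1
  ext y
  exact hp y

lemma periodic_iD {f : ℝ → ℝ} (hf : SM f) (hp : Periodic f T) (n : ℕ) :
    Periodic (iteratedDeriv n f) T := by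
  induction n with
  | zero => simpa using hp
  | succ k ih =>
      rw [iteratedDeriv_succ]
      exact periodic_deriv' (smooth_iD hf k) ih

lemma endpoints_eq {f : ℝ → ℝ} (hp : Periodic f T) : f T = f 0 := by
  simpa using (hp 0)

/-- Integration by parts for smooth periodic functions. -/
lemma ibp {f g : ℝ → ℝ} (hf : SM f) (hg : SM g)
    (hpf : Periodic f T) (hpg : Periodic g T) :
    ∫ x in (0:ℝ)..T, deriv f x * g x = -∫ x in (0:ℝ)..T, f x * deriv g x := by
  have hf' : Continuous (deriv f) := ((smooth_iD hf 1).continuous).congr (by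
    intro x; rw [iteratedDeriv_one])
  have hg' : Continuous (deriv g) := ((smooth_iD hg 1).continuous).congr (by
    intro x; rw [iteratedDeriv_one])
  have h := intervalIntegral.integral_mul_deriv_eq_deriv_mul
    (u := f) (v := g) (u' := deriv f) (v' := deriv g) (a := 0) (b := T)
    (fun x _ => (hf.differentiable (by simp) x).hasDerivAt)
    (fun x _ => (hg.differentiable (by simp) x).hasDerivAt)
    (hf'.intervalIntegrable _ _) (hg'.intervalIntegrable _ _)
  rw [endpoints_eq hpf, endpoints_eq hpg] at h
  have : ∫ x in (0:ℝ)..T, f x * deriv g x = -∫ x in (0:ℝ)..T, deriv f x * g x := by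
    rw [h]; ring
  linarith [this]

/-- Cauchy–Schwarz for interval integrals of continuous functions. -/
lemma cauchy_schwarz {f g : ℝ → ℝ} (hf : Continuous f) (hg : Continuous g) :
    ∫ x in (0:ℝ)..T, f x * g x ≤
      Real.sqrt (∫ x in (0:ℝ)..T, (f x)^2) * Real.sqrt (∫ x in (0:ℝ)..T, (g x)^2) := by
  set A := ∫ x in (0:ℝ)..T, (f x)^2 with hA
  set B := ∫ x in (0:ℝ)..T, f x * g x with hB
  set C := ∫ x in (0:ℝ)..T, (g x)^2 with hC
  have hA0 : 0 ≤ A := intervalIntegral.integral_nonneg hT0.le (fun x _ => sq_nonneg _)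
  have hC0 : 0 ≤ C := intervalIntegral.integral_nonneg hT0.le (fun x _ => sq_nonneg _)
  have key : ∀ t : ℝ, 0 ≤ A * (t*t) + (2*B) * t + C := by
    intro t
    have h1 : ∫ x in (0:ℝ)..T, (t * f x + g x)^2 =
        A * (t*t) + (2*B) * t + C := by
      have e1 : ∀ x : ℝ, (t * f x + g x)^2 =
          (t*t) * (f x)^2 + (2*t) * (f x * g x) + (g x)^2 := by intro x; ring
      rw [intervalIntegral.integral_congr (g := fun x =>
          (t*t) * (f x)^2 + (2*t) * (f x * g x) + (g x)^2) (fun x _ => e1 x)]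
      rw [intervalIntegral.integral_add (((continuous_const.fun_mul (hf.fun_pow 2)).fun_add
            (continuous_const.fun_mul (hf.fun_mul hg))).intervalIntegrable _ _)
            ((hg.fun_pow 2).intervalIntegrable _ _),
          intervalIntegral.integral_add ((continuous_const.fun_mul (hf.fun_pow 2)).intervalIntegrable _ _)
            ((continuous_const.fun_mul (hf.fun_mul hg)).intervalIntegrable _ _),
          intervalIntegral.integral_const_mul, intervalIntegral.integral_const_mul]
      ring
    have h2 : 0 ≤ ∫ x in (0:ℝ)..T, (t * f x + g x)^2 :=
      intervalIntegral.integral_nonneg hT0.le (fun x _ => sq_nonneg _)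
    linarith [h1 ▸ h2]
  have hd := discrim_le_zero key
  rw [discrim] at hd
  have hB2 : B^2 ≤ A * C := by nlinarith
  calc B ≤ |B| := le_abs_self B
    _ = Real.sqrt (B^2) := (Real.sqrt_sq_eq_abs B).symm
    _ ≤ Real.sqrt (A * C) := Real.sqrt_le_sqrt hB2
    _ = Real.sqrt A * Real.sqrt C := Real.sqrt_mul hA0 C


-- from part1 (assumed): hT0 one_le_inf smooth_iD periodic_deriv' periodic_iD endpoints_eq ibp cauchy_schwarz

lemma smooth_deriv {f : ℝ → ℝ} (hf : SM f) : SM (deriv f) := by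
  have := smooth_iD hf 1
  rwa [iteratedDeriv_one] at this

lemma cont_deriv {f : ℝ → ℝ} (hf : SM f) : Continuous (deriv f) :=
  (smooth_deriv hf).continuous


lemma core {φ u : ℝ → ℝ} (hφ : SM φ) (hφp : Periodic φ T) (hu : SM u) (hup : Periodic u T) :
    ∫ x in (0:ℝ)..T, (-(deriv (deriv (deriv (deriv u))) x)
        - 2 * deriv (deriv (deriv (fun y => deriv φ y * u y))) x) * u x
      = -(∫ x in (0:ℝ)..T, (deriv (deriv u) x)^2)
        - 2 * (∫ x in (0:ℝ)..T, deriv (deriv φ) x * (u x * deriv (deriv u) x))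
        + ∫ x in (0:ℝ)..T, deriv (deriv φ) x * (deriv u x)^2 := by
  set w : ℝ → ℝ := fun y => deriv φ y * u y with hw_def
  have hw : SM w := (smooth_deriv hφ).mul hu
  have hwp : Periodic w T := (periodic_deriv' hφ hφp).mul hup
  -- continuity of everything
  have cu : Continuous u := hu.continuous
  have cu1 : Continuous (deriv u) := cont_deriv hu
  have cu2 : Continuous (deriv (deriv u)) := cont_deriv (smooth_deriv hu)
  have cu3 : Continuous (deriv (deriv (deriv u))) := cont_deriv (smooth_deriv (smooth_deriv hu))
  have cu4 : Continuous (deriv (deriv (deriv (deriv u)))) :=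
    cont_deriv (smooth_deriv (smooth_deriv (smooth_deriv hu)))
  have cw3 : Continuous (deriv (deriv (deriv w))) :=
    cont_deriv (smooth_deriv (smooth_deriv hw))
  have cφ2 : Continuous (deriv (deriv φ)) := cont_deriv (smooth_deriv hφ)
  -- split the integral
  have split : ∫ x in (0:ℝ)..T, (-(deriv (deriv (deriv (deriv u))) x)
        - 2 * deriv (deriv (deriv w)) x) * u x
      = -(∫ x in (0:ℝ)..T, deriv (deriv (deriv (deriv u))) x * u x)
        - 2 * ∫ x in (0:ℝ)..T, deriv (deriv (deriv w)) x * u x := by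
    have e : ∀ x : ℝ, (-(deriv (deriv (deriv (deriv u))) x)
        - 2 * deriv (deriv (deriv w)) x) * u x
        = -(deriv (deriv (deriv (deriv u))) x * u x)
          - 2 * (deriv (deriv (deriv w)) x * u x) := by intro x; ring
    rw [intervalIntegral.integral_congr (fun x _ => e x),
        intervalIntegral.integral_sub ((cu4.fun_mul cu).fun_neg.intervalIntegrable _ _)
          ((continuous_const.fun_mul (cw3.fun_mul cu)).intervalIntegrable _ _),
        intervalIntegral.integral_neg, intervalIntegral.integral_const_mul]
  -- eq1 : ∫ u'''' u = ∫ (u'')²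
  -- smoothness/periodicity chains
  have su1 : SM (deriv u) := smooth_deriv hu
  have su2 : SM (deriv (deriv u)) := smooth_deriv su1
  have su3 : SM (deriv (deriv (deriv u))) := smooth_deriv su2
  have pu1 : Periodic (deriv u) T := periodic_deriv' hu hup
  have pu2 : Periodic (deriv (deriv u)) T := periodic_deriv' su1 pu1
  have pu3 : Periodic (deriv (deriv (deriv u))) T := periodic_deriv' su2 pu2
  have sw1 : SM (deriv w) := smooth_deriv hw
  have sw2 : SM (deriv (deriv w)) := smooth_deriv sw1
  have pw1 : Periodic (deriv w) T := periodic_deriv' hw hwp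
  have pw2 : Periodic (deriv (deriv w)) T := periodic_deriv' sw1 pw1
  -- eq1
  have A1 := ibp su3 hu pu3 hup
  have A2 := ibp su2 su1 pu2 pu1
  have eq1 : ∫ x in (0:ℝ)..T, deriv (deriv (deriv (deriv u))) x * u x
      = ∫ x in (0:ℝ)..T, (deriv (deriv u) x)^2 := by
    rw [A1, A2, neg_neg]
    exact intervalIntegral.integral_congr (fun x _ => (sq (deriv (deriv u) x)).symm)
  -- eq2
  have B1 := ibp sw2 hu pw2 hup
  have B2 := ibp sw1 su1 pw1 pu1
  have eq2 : ∫ x in (0:ℝ)..T, deriv (deriv (deriv w)) x * u x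
      = ∫ x in (0:ℝ)..T, deriv w x * deriv (deriv u) x := by
    rw [B1, B2, neg_neg]
  -- eq3
  have eq3 : ∀ x : ℝ, deriv w x = deriv (deriv φ) x * u x + deriv φ x * deriv u x := by
    intro x
    rw [hw_def]
    exact deriv_mul ((smooth_deriv hφ).differentiable (by simp) x)
      (hu.differentiable (by simp) x)
  -- eq4
  have cφ1 : Continuous (deriv φ) := cont_deriv hφ
  have eq4 : ∫ x in (0:ℝ)..T, deriv w x * deriv (deriv u) x
      = (∫ x in (0:ℝ)..T, deriv (deriv φ) x * (u x * deriv (deriv u) x))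
        + ∫ x in (0:ℝ)..T, deriv φ x * (deriv u x * deriv (deriv u) x) := by
    have e : ∀ x ∈ Set.uIcc (0:ℝ) T, deriv w x * deriv (deriv u) x
        = deriv (deriv φ) x * (u x * deriv (deriv u) x)
          + deriv φ x * (deriv u x * deriv (deriv u) x) := by
      intro x _; rw [eq3 x]; ring
    rw [intervalIntegral.integral_congr e,
        intervalIntegral.integral_add ((cφ2.fun_mul (cu.fun_mul cu2)).intervalIntegrable _ _)
          ((cφ1.fun_mul (cu1.fun_mul cu2)).intervalIntegrable _ _)]
  -- eq5
  have squ : SM (fun x => deriv u x * deriv u x) := su1.mul su1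
  have pqu : Periodic (fun x => deriv u x * deriv u x) T := pu1.mul pu1
  have C1 := ibp squ (smooth_deriv hφ) pqu (periodic_deriv' hφ hφp)
  have dsq : ∀ x : ℝ, deriv (fun x => deriv u x * deriv u x) x
      = 2 * (deriv u x * deriv (deriv u) x) := by
    intro x
    rw [deriv_fun_mul (su1.differentiable (by simp) x) (su1.differentiable (by simp) x)]
    ring
  have eq5 : ∫ x in (0:ℝ)..T, deriv φ x * (deriv u x * deriv (deriv u) x)
      = -(1/2) * ∫ x in (0:ℝ)..T, deriv (deriv φ) x * (deriv u x)^2 := by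
    have l1 : ∫ x in (0:ℝ)..T, deriv (fun x => deriv u x * deriv u x) x * deriv φ x
        = ∫ x in (0:ℝ)..T, 2 * (deriv φ x * (deriv u x * deriv (deriv u) x)) := by
      apply intervalIntegral.integral_congr
      intro x _; simp only; rw [dsq x]; ring
    have l2 : ∫ x in (0:ℝ)..T, deriv u x * deriv u x * deriv (deriv φ) x
        = ∫ x in (0:ℝ)..T, deriv (deriv φ) x * (deriv u x)^2 := by
      apply intervalIntegral.integral_congr
      intro x _; simp only; ring
    rw [l1, l2] at C1
    rw [intervalIntegral.integral_const_mul] at C1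
    linarith
  rw [split, eq1, eq2, eq4, eq5]
  ring


instance : Fact (0 < T) := ⟨hT0⟩

/-- Fourier coefficient on [0, T] of a real function. -/
def cF (f : ℝ → ℝ) (n : ℤ) : ℂ :=
  fourierCoeffOn (lt_add_of_pos_right 0 hT0) (fun x => (f x : ℂ)) n

lemma cF_zero {f : ℝ → ℝ} (hm : (∫ x in (0:ℝ)..T, f x) = 0) : cF f 0 = 0 := by
  rw [cF, fourierCoeffOn_eq_integral]
  simp only [neg_zero, fourier_zero, one_smul, zero_add, sub_zero]
  rw [intervalIntegral.integral_ofReal, hm]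
  simp

lemma cF_deriv {f : ℝ → ℝ} (hf : SM f) (hp : Periodic f T) {n : ℤ} (hn : n ≠ 0) :
    cF (deriv f) n = Complex.I * n * cF f n := by
  have hder : ∀ x ∈ Set.uIcc (0:ℝ) (0 + T), HasDerivAt (fun y : ℝ => ((f y : ℂ)))
      (Complex.ofReal (deriv f x)) x :=
    fun x _ => ((hf.differentiable (by simp) x).hasDerivAt).ofReal_comp
  have key := fourierCoeffOn_of_hasDerivAt (lt_add_of_pos_right 0 hT0) hn hder
    ((Complex.continuous_ofReal.comp (cont_deriv hf)).intervalIntegrable _ _)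
  have hfT : f (0 + T) = f 0 := by rw [zero_add]; exact endpoints_eq hp
  rw [hfT, sub_self, mul_zero, zero_sub] at key
  have hπ : (π:ℂ) ≠ 0 := Complex.ofReal_ne_zero.mpr Real.pi_ne_zero
  have hn' : (n:ℂ) ≠ 0 := Int.cast_ne_zero.mpr hn
  rw [cF, cF, key]
  push_cast
  field_simp
  ring
lemma norm_cF_le {f : ℝ → ℝ} (hf : SM f) (hp : Periodic f T) {n : ℤ} (hn : n ≠ 0) :
    ‖cF f n‖ ≤ ‖cF (deriv f) n‖ := by
  rw [cF_deriv hf hp hn]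
  rw [norm_mul, norm_mul, Complex.norm_I, one_mul]
  have h1 : (1:ℝ) ≤ ‖(n:ℂ)‖ := by
    rw [Complex.norm_intCast]
    exact_mod_cast Int.one_le_abs (by omega)
  nlinarith [norm_nonneg (cF f n)]

/-- Parseval on [0,T] for continuous periodic real functions. -/
lemma parseval {f : ℝ → ℝ} (hc : Continuous f) (hp : Periodic f T) :
    Summable (fun n : ℤ => ‖cF f n‖^2) ∧
    T * ∑' n : ℤ, ‖cF f n‖^2 = ∫ x in (0:ℝ)..T, (f x)^2 := by
  set fc : ℝ → ℂ := fun x => (f x : ℂ) with hfc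
  have hcc : Continuous fc := Complex.continuous_ofReal.comp hc
  have hends : fc 0 = fc T := by rw [hfc]; simp [endpoints_eq hp]
  set G : C(AddCircle T, ℂ) :=
    ⟨AddCircle.liftIco T 0 fc, AddCircle.liftIco_zero_continuous hends hcc.continuousOn⟩ with hG
  set F2 : Lp ℂ 2 (@AddCircle.haarAddCircle T _) :=
    ContinuousMap.toLp 2 AddCircle.haarAddCircle ℂ G with hF2
  have hcoeff : ∀ n : ℤ, fourierCoeff (F2 : AddCircle T → ℂ) n = cF f n := by
    intro n
    rw [fourierCoeff_toLp]
    exact fourierCoeff_liftIco_eq fc n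
  -- summability
  have hsum0 := Memℓp.summable (by norm_num) (lp.memℓp (fourierBasis.repr F2))
  have hsum : Summable (fun n : ℤ => ‖cF f n‖^2) := by
    refine hsum0.congr (fun n => ?_)
    rw [fourierBasis_repr, hcoeff n]
    norm_num
  refine ⟨hsum, ?_⟩
  -- Parseval
  have hpars := tsum_sq_fourierCoeff F2
  have htsum : ∑' n : ℤ, ‖cF f n‖^2 = ∫ t : AddCircle T, ‖F2 t‖^2 ∂AddCircle.haarAddCircle := by
    rw [← hpars]
    exact tsum_congr (fun n => by rw [hcoeff n])
  -- replace F2 by G a.e.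
  have hae : ∫ t : AddCircle T, ‖F2 t‖^2 ∂AddCircle.haarAddCircle
      = ∫ t : AddCircle T, ‖G t‖^2 ∂AddCircle.haarAddCircle := by
    apply MeasureTheory.integral_congr_ae
    filter_upwards [ContinuousMap.coeFn_toLp (p := 2) AddCircle.haarAddCircle (𝕜 := ℂ) G] with t ht
    rw [ht]
  -- haar vs volume
  have hvol : ∫ t : AddCircle T, ‖G t‖^2 ∂(volume : Measure (AddCircle T))
      = T * ∫ t : AddCircle T, ‖G t‖^2 ∂AddCircle.haarAddCircle := by
    rw [AddCircle.volume_eq_smul_haarAddCircle, MeasureTheory.integral_smul_measure]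
    rw [ENNReal.toReal_ofReal hT0.le, smul_eq_mul]
  -- interval integral
  have hint : ∫ t : AddCircle T, ‖G t‖^2 ∂(volume : Measure (AddCircle T))
      = ∫ x in (0:ℝ)..T, (f x)^2 := by
    rw [← AddCircle.intervalIntegral_preimage T 0 (fun t => ‖G t‖^2)]
    rw [zero_add]
    apply intervalIntegral.integral_congr
    intro x hx
    rw [Set.uIcc_of_le hT0.le] at hx
    have hval : G (x : AddCircle T) = fc x := by
      simp only [hG, ContinuousMap.coe_mk]
      rcases lt_or_eq_of_le hx.2 with h | h
      · refine AddCircle.liftIco_coe_apply ?_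
        rw [zero_add]
        exact Set.mem_Ico.mpr ⟨hx.1, h⟩
      · have hxT : x = T := h
        have : ((x : ℝ) : AddCircle T) = ((0:ℝ) : AddCircle T) := by
          rw [hxT]; simpa using (AddCircle.coe_period (p := T))
        rw [this]
        have h0 : AddCircle.liftIco T 0 fc ((0:ℝ) : AddCircle T) = fc 0 := by
          refine AddCircle.liftIco_coe_apply ?_
          rw [zero_add]
          exact Set.mem_Ico.mpr ⟨le_refl 0, hT0⟩
        rw [h0, hends, hxT]
    simp only [hval, hfc]
    rw [Complex.norm_real, Real.norm_eq_abs, sq_abs]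
  rw [htsum, hae, ← hvol]
  exact hint

/-- Wirtinger-type inequality: for smooth periodic zero-mean u, ‖u‖ ≤ ‖u''‖. -/
lemma wirtinger {u : ℝ → ℝ} (hu : SM u) (hup : Periodic u T)
    (hm : (∫ x in (0:ℝ)..T, u x) = 0) :
    ∫ x in (0:ℝ)..T, (u x)^2 ≤ ∫ x in (0:ℝ)..T, (deriv (deriv u) x)^2 := by
  have su1 : SM (deriv u) := smooth_deriv hu
  have pu1 : Periodic (deriv u) T := periodic_deriv' hu hup
  have hpt : ∀ n : ℤ, ‖cF u n‖^2 ≤ ‖cF (deriv (deriv u)) n‖^2 := by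
    intro n
    rcases eq_or_ne n 0 with rfl | hn
    · rw [cF_zero hm]
      simpa using sq_nonneg _
    · have h1 := norm_cF_le hu hup hn
      have h2 := norm_cF_le su1 pu1 hn
      have := h1.trans h2
      exact pow_le_pow_left₀ (norm_nonneg _) this 2
  obtain ⟨s1, e1⟩ := parseval hu.continuous hup
  obtain ⟨s2, e2⟩ := parseval (cont_deriv su1) (periodic_deriv' su1 pu1)
  rw [← e1, ← e2]
  have := Summable.tsum_le_tsum hpt s1 s2
  nlinarith [hT0]
lemma supNorm_bound {h : ℝ → ℝ} (hc : Continuous h) :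
    (0 ≤ supNorm h) ∧ ∀ x ∈ Set.Icc (0:ℝ) T, |h x| ≤ supNorm h := by
  have hbdd : BddAbove ((fun x => |h x|) '' Set.Icc (0:ℝ) T) :=
    (isCompact_Icc.image (continuous_abs.comp hc)).bddAbove
  have hle : ∀ x ∈ Set.Icc (0:ℝ) T, |h x| ≤ supNorm h := by
    intro x hx
    exact le_csSup hbdd ⟨x, hx, rfl⟩
  refine ⟨?_, hle⟩
  exact le_trans (abs_nonneg (h 0)) (hle 0 ⟨le_refl 0, hT0.le⟩)


end
end Stmt0Aux
/-- worst-case estimate ⟨A_φ u, u⟩ ≤ -(1/2)‖u_xx‖² + (9/2)‖φ_xx‖_∞²‖u‖²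
and consequently ⟨A_φ u, u⟩ ≤ (-(1/2) + (9/2)‖φ_xx‖_∞²)‖u‖². -/
theorem stmt0 (φ : ℝ → ℝ) (hφ : ContDiff ℝ (⊤ : ℕ∞) φ) (hφp : Function.Periodic φ (2*Real.pi))
    (u : ℝ → ℝ) (hu : InH u) :
    L2inner (Aop φ u) u ≤ -(1/2) * (L2norm (iteratedDeriv 2 u))^2
        + (9/2) * (supNorm (iteratedDeriv 2 φ))^2 * (L2norm u)^2 ∧
    L2inner (Aop φ u) u ≤ (-(1/2) + (9/2) * (supNorm (iteratedDeriv 2 φ))^2) * (L2norm u)^2 := by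
  obtain ⟨husm, hup, hum⟩ := hu
  have hφs : ContDiff ℝ (↑(⊤:ℕ∞)) φ := hφ.of_le (by simp)
  have hus : ContDiff ℝ (↑(⊤:ℕ∞)) u := husm.of_le (by simp)
  have e4 : iteratedDeriv 4 u = deriv (deriv (deriv (deriv u))) := by
    rw [iteratedDeriv_eq_iterate]; rfl
  have e3 : iteratedDeriv 3 (fun y => deriv φ y * u y)
      = deriv (deriv (deriv (fun y => deriv φ y * u y))) := by
    rw [iteratedDeriv_eq_iterate]; rfl
  have e2u : iteratedDeriv 2 u = deriv (deriv u) := by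
    rw [iteratedDeriv_eq_iterate]; rfl
  have e2φ : iteratedDeriv 2 φ = deriv (deriv φ) := by
    rw [iteratedDeriv_eq_iterate]; rfl
  -- continuity facts
  have su1 : ContDiff ℝ (↑(⊤:ℕ∞)) (deriv u) := smooth_deriv hus
  have su2 : ContDiff ℝ (↑(⊤:ℕ∞)) (deriv (deriv u)) := smooth_deriv su1
  have pu1 : Function.Periodic (deriv u) (2*Real.pi) := periodic_deriv' hus hup
  have cu : Continuous u := hus.continuous
  have cu1 : Continuous (deriv u) := su1.continuous
  have cu2 : Continuous (deriv (deriv u)) := su2.continuous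
  have cφ2 : Continuous (deriv (deriv φ)) :=
    (smooth_deriv (smooth_deriv hφs)).continuous
  -- the core identity
  have hI : L2inner (Aop φ u) u
      = -(∫ x in (0:ℝ)..(2*Real.pi), (deriv (deriv u) x)^2)
        - 2 * (∫ x in (0:ℝ)..(2*Real.pi), deriv (deriv φ) x * (u x * deriv (deriv u) x))
        + ∫ x in (0:ℝ)..(2*Real.pi), deriv (deriv φ) x * (deriv u x)^2 := by
    unfold L2inner Aop
    rw [e4, e3]
    exact core hφs hφp hus hup
  -- notations
  set M := supNorm (iteratedDeriv 2 φ) with hM_def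
  obtain ⟨hM0, hMb⟩ := supNorm_bound cφ2
  have hMb' : ∀ x ∈ Set.Icc (0:ℝ) (2*Real.pi), |deriv (deriv φ) x| ≤ M := by
    rw [hM_def, e2φ]; exact hMb
  have hM0' : 0 ≤ M := by rw [hM_def, e2φ]; exact hM0
  set X := L2norm (iteratedDeriv 2 u) with hX_def
  set Y := L2norm u with hY_def
  have hX0 : 0 ≤ X := Real.sqrt_nonneg _
  have hY0 : 0 ≤ Y := Real.sqrt_nonneg _
  have hX2 : X^2 = ∫ x in (0:ℝ)..(2*Real.pi), (deriv (deriv u) x)^2 := by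
    rw [hX_def, L2norm, e2u]
    exact Real.sq_sqrt (intervalIntegral.integral_nonneg hT0.le fun x _ => sq_nonneg _)
  have hY2 : Y^2 = ∫ x in (0:ℝ)..(2*Real.pi), (u x)^2 := by
    rw [hY_def, L2norm]
    exact Real.sq_sqrt (intervalIntegral.integral_nonneg hT0.le fun x _ => sq_nonneg _)
  -- estimate 1 : ∫ (φ'' u)² ≤ M² Y²
  have est1 : ∫ x in (0:ℝ)..(2*Real.pi), (deriv (deriv φ) x * u x)^2 ≤ M^2 * Y^2 := by
    have step : ∫ x in (0:ℝ)..(2*Real.pi), (deriv (deriv φ) x * u x)^2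
        ≤ ∫ x in (0:ℝ)..(2*Real.pi), M^2 * (u x)^2 := by
      apply intervalIntegral.integral_mono_on hT0.le
        (((cφ2.fun_mul cu).fun_pow 2).intervalIntegrable _ _)
        ((continuous_const.fun_mul (cu.fun_pow 2)).intervalIntegrable _ _)
      intro x hx
      have h1 := hMb' x hx
      have h2 : (deriv (deriv φ) x)^2 ≤ M^2 := by
        have h3 := mul_self_le_mul_self (abs_nonneg (deriv (deriv φ) x)) h1
        rw [abs_mul_abs_self] at h3
        nlinarith [h3]
      nlinarith [mul_le_mul_of_nonneg_right h2 (sq_nonneg (u x))]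
    rw [intervalIntegral.integral_const_mul, ← hY2] at step
    exact step
  -- bound 1 : -(∫ φ'' (u u'')) ≤ M * Y * X
  have b1 : -(∫ x in (0:ℝ)..(2*Real.pi), deriv (deriv φ) x * (u x * deriv (deriv u) x))
      ≤ M * Y * X := by
    have cs := cauchy_schwarz (f := fun x => -(deriv (deriv φ) x * u x))
      (g := fun x => deriv (deriv u) x) ((cφ2.mul cu).neg) cu2
    have l1 : ∫ x in (0:ℝ)..(2*Real.pi), (fun x => -(deriv (deriv φ) x * u x)) x
          * (fun x => deriv (deriv u) x) x
        = -(∫ x in (0:ℝ)..(2*Real.pi), deriv (deriv φ) x * (u x * deriv (deriv u) x)) := by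
      rw [← intervalIntegral.integral_neg]
      apply intervalIntegral.integral_congr
      intro x _; simp only; ring
    have l2 : ∫ x in (0:ℝ)..(2*Real.pi), ((fun x => -(deriv (deriv φ) x * u x)) x)^2
        = ∫ x in (0:ℝ)..(2*Real.pi), (deriv (deriv φ) x * u x)^2 := by
      apply intervalIntegral.integral_congr
      intro x _; simp only; ring
    rw [l1, l2] at cs
    have s1 : Real.sqrt (∫ x in (0:ℝ)..(2*Real.pi), (deriv (deriv φ) x * u x)^2)
        ≤ M * Y := by
      have : M^2 * Y^2 = (M*Y)^2 := by ring
      calc Real.sqrt (∫ x in (0:ℝ)..(2*Real.pi), (deriv (deriv φ) x * u x)^2)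
          ≤ Real.sqrt ((M*Y)^2) := Real.sqrt_le_sqrt (by rw [← this]; exact est1)
        _ = M * Y := Real.sqrt_sq (mul_nonneg hM0' hY0)
    have s2 : Real.sqrt (∫ x in (0:ℝ)..(2*Real.pi), ((fun x => deriv (deriv u) x) x)^2) = X := by
      rw [hX_def, L2norm, e2u]
    rw [s2] at cs
    calc -(∫ x in (0:ℝ)..(2*Real.pi), deriv (deriv φ) x * (u x * deriv (deriv u) x))
        ≤ Real.sqrt (∫ x in (0:ℝ)..(2*Real.pi), (deriv (deriv φ) x * u x)^2) * X := cs
      _ ≤ (M * Y) * X := mul_le_mul_of_nonneg_right s1 hX0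
  -- bound 2 : ∫ φ'' (u')² ≤ M * (Y * X)
  have b2 : ∫ x in (0:ℝ)..(2*Real.pi), deriv (deriv φ) x * (deriv u x)^2 ≤ M * (Y * X) := by
    have s1 : ∫ x in (0:ℝ)..(2*Real.pi), deriv (deriv φ) x * (deriv u x)^2
        ≤ M * ∫ x in (0:ℝ)..(2*Real.pi), (deriv u x)^2 := by
      rw [← intervalIntegral.integral_const_mul]
      apply intervalIntegral.integral_mono_on hT0.le
        ((cφ2.mul (cu1.pow 2)).intervalIntegrable _ _)
        ((continuous_const.mul (cu1.pow 2)).intervalIntegrable _ _)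
      intro x hx
      exact mul_le_mul_of_nonneg_right ((le_abs_self _).trans (hMb' x hx)) (sq_nonneg _)
    have s2 : ∫ x in (0:ℝ)..(2*Real.pi), (deriv u x)^2
        = -(∫ x in (0:ℝ)..(2*Real.pi), u x * deriv (deriv u) x) := by
      have := ibp hus su1 hup pu1
      rw [← this]
      apply intervalIntegral.integral_congr
      intro x _; exact sq (deriv u x)
    have s3 : -(∫ x in (0:ℝ)..(2*Real.pi), u x * deriv (deriv u) x) ≤ Y * X := by
      have cs := cauchy_schwarz (f := fun x => -u x)
        (g := fun x => deriv (deriv u) x) cu.neg cu2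
      have l1 : ∫ x in (0:ℝ)..(2*Real.pi), (fun x => -u x) x * (fun x => deriv (deriv u) x) x
          = -(∫ x in (0:ℝ)..(2*Real.pi), u x * deriv (deriv u) x) := by
        rw [← intervalIntegral.integral_neg]
        apply intervalIntegral.integral_congr
        intro x _; simp only; ring
      have l2 : ∫ x in (0:ℝ)..(2*Real.pi), ((fun x => -u x) x)^2
          = ∫ x in (0:ℝ)..(2*Real.pi), (u x)^2 := by
        apply intervalIntegral.integral_congr
        intro x _; simp only; ring
      rw [l1, l2] at cs
      have r1 : Real.sqrt (∫ x in (0:ℝ)..(2*Real.pi), (u x)^2) = Y := by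
        rw [hY_def, L2norm]
      have r2 : Real.sqrt (∫ x in (0:ℝ)..(2*Real.pi), ((fun x => deriv (deriv u) x) x)^2)
          = X := by rw [hX_def, L2norm, e2u]
      rw [r1, r2] at cs
      exact cs
    calc ∫ x in (0:ℝ)..(2*Real.pi), deriv (deriv φ) x * (deriv u x)^2
        ≤ M * ∫ x in (0:ℝ)..(2*Real.pi), (deriv u x)^2 := s1
      _ ≤ M * (Y * X) := by
          rw [s2]
          exact mul_le_mul_of_nonneg_left s3 hM0'
  -- combine
  have main : L2inner (Aop φ u) u ≤ -X^2 + 3 * M * Y * X := by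
    rw [hI, ← hX2]
    nlinarith [b1, b2]
  have first : L2inner (Aop φ u) u ≤ -(1/2) * X^2 + (9/2) * M^2 * Y^2 := by
    nlinarith [sq_nonneg (X - 3*M*Y)]
  have hwirt : Y^2 ≤ X^2 := by
    rw [hX2, hY2]
    exact wirtinger hus hup hum
  constructor
  · exact first
  · nlinarith [first, hwirt]
end

section
/- Let φ be a smooth 2π-periodic function, n ≥ 1, p ∈ H_n, and let q be a smooth 2π-periodic function with zero mean whose Fourier coefficients vanish for |k| ≤ n. Then ⟨A_φ q, p⟩ ≤ (2‖φ_xx‖_∞ + 2‖φ_x‖_∞) · (1/n) · ‖q_xx‖ · ‖p_xx‖. -/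
open MeasureTheory Real Filter

open intervalIntegral AddCircle
open scoped ContDiff

namespace Stmt10Aux

noncomputable abbrev T : ℝ := 2 * Real.pi

lemma T_pos : (0:ℝ) < T := by positivity

/-- Smooth functions: class used throughout. -/
structure Sm (f : ℝ → ℝ) : Prop where
  smooth : ContDiff ℝ ∞ f
  per : Function.Periodic f T

lemma Sm.cont {f : ℝ → ℝ} (h : Sm f) : Continuous f := h.smooth.continuous

lemma Sm.hasDerivAt {f : ℝ → ℝ} (h : Sm f) (x : ℝ) : HasDerivAt f (deriv f x) x :=
  ((h.smooth.differentiable (by simp)) x).hasDerivAt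

lemma periodic_deriv {f : ℝ → ℝ} (hf : Function.Periodic f T) :
    Function.Periodic (deriv f) T := by
  intro x
  have h : f = fun y => f (y + T) := funext fun y => (hf y).symm
  conv_rhs => rw [h]
  rw [deriv_comp_add_const]

lemma Sm.deriv {f : ℝ → ℝ} (h : Sm f) : Sm (deriv f) :=
  ⟨(contDiff_infty_iff_deriv.mp h.smooth).2, periodic_deriv h.per⟩

lemma Sm.mul {f g : ℝ → ℝ} (hf : Sm f) (hg : Sm g) : Sm (fun x => f x * g x) :=
  ⟨hf.smooth.mul hg.smooth, fun x => by simp [hf.per x, hg.per x]⟩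

lemma Sm.intervalIntegrable {f : ℝ → ℝ} (h : Sm f) :
    IntervalIntegrable f volume 0 T := h.cont.intervalIntegrable _ _

/-- Integration by parts for periodic functions (real). -/
lemma ibp {f g : ℝ → ℝ} (hf : Sm f) (hg : Sm g) :
    ∫ x in (0:ℝ)..T, f x * deriv g x = -∫ x in (0:ℝ)..T, deriv f x * g x := by
  have h := integral_mul_deriv_eq_deriv_mul (a := 0) (b := T)
    (fun x _ => hf.hasDerivAt x) (fun x _ => hg.hasDerivAt x)
    hf.deriv.intervalIntegrable hg.deriv.intervalIntegrable
  have hfT : f T = f 0 := by simpa using hf.per 0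
  have hgT : g T = g 0 := by simpa using hg.per 0
  rw [h, hfT, hgT]; ring

/-- Cauchy–Schwarz on the interval. -/
lemma cauchy_schwarz {f g : ℝ → ℝ} (hf : Continuous f) (hg : Continuous g) :
    (∫ x in (0:ℝ)..T, f x * g x) ≤
      Real.sqrt (∫ x in (0:ℝ)..T, (f x)^2) * Real.sqrt (∫ x in (0:ℝ)..T, (g x)^2) := by
  set A := ∫ x in (0:ℝ)..T, (f x)^2 with hA
  set B := ∫ x in (0:ℝ)..T, f x * g x with hB
  set C := ∫ x in (0:ℝ)..T, (g x)^2 with hC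
  have hAnn : 0 ≤ A := intervalIntegral.integral_nonneg T_pos.le (fun x _ => sq_nonneg _)
  have hCnn : 0 ≤ C := intervalIntegral.integral_nonneg T_pos.le (fun x _ => sq_nonneg _)
  have key : ∀ t : ℝ, 0 ≤ C * t^2 + (2*B) * t + A := by
    intro t
    have h0 : 0 ≤ ∫ x in (0:ℝ)..T, (f x + t * g x)^2 :=
      intervalIntegral.integral_nonneg T_pos.le (fun x _ => sq_nonneg _)
    have i1 : IntervalIntegrable (fun x => (f x)^2) volume 0 T := ((hf.pow 2).intervalIntegrable _ _)
    have i2 : IntervalIntegrable (fun x => (2*t) * (f x * g x)) volume 0 T :=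
      ((continuous_const.mul (hf.mul hg)).intervalIntegrable _ _)
    have i3 : IntervalIntegrable (fun x => t^2 * (g x)^2) volume 0 T :=
      ((continuous_const.mul (hg.pow 2)).intervalIntegrable _ _)
    have hexp : (∫ x in (0:ℝ)..T, (f x + t * g x)^2)
        = A + 2*t*B + t^2*C := by
      have h1 : ∀ x : ℝ, (f x + t * g x)^2
          = (f x)^2 + ((2*t) * (f x * g x) + t^2 * (g x)^2) := by intro x; ring
      simp_rw [h1]
      rw [intervalIntegral.integral_add i1 (i2.add i3), intervalIntegral.integral_add i2 i3,
        intervalIntegral.integral_const_mul, intervalIntegral.integral_const_mul]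
      ring
    nlinarith [h0, hexp]
  have hdisc : discrim C (2*B) A ≤ 0 := by
    rcases eq_or_lt_of_le hCnn with hC0 | hC0
    · -- C = 0 : then B must be 0
      have hB0 : B = 0 := by
        by_contra hB0
        rcases lt_or_gt_of_ne hB0 with h | h
        · have := key ((-A-1)/(2*B))
          rw [← hC0] at this
          have h2B : (2*B) * ((-A-1)/(2*B)) = -A-1 := by
            field_simp
          nlinarith [this, h2B]
        · have := key ((-A-1)/(2*B))
          rw [← hC0] at this
          have h2B : (2*B) * ((-A-1)/(2*B)) = -A-1 := by
            field_simp
          nlinarith [this, h2B]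
      rw [discrim, ← hC0, hB0]; nlinarith
    · exact discrim_le_zero (fun x => by have := key x; nlinarith [this])
  have hB2 : B^2 ≤ A * C := by
    rw [discrim] at hdisc; nlinarith
  calc B ≤ |B| := le_abs_self B
    _ = Real.sqrt (B^2) := (Real.sqrt_sq_eq_abs B).symm
    _ ≤ Real.sqrt (A * C) := Real.sqrt_le_sqrt hB2
    _ = Real.sqrt A * Real.sqrt C := Real.sqrt_mul hAnn _


-- exp helper
noncomputable def eK (k : ℤ) : ℝ → ℂ := fun x => Complex.exp (-Complex.I * (k:ℂ) * (x:ℂ))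

lemma eK_hasDerivAt (k : ℤ) (x : ℝ) :
    HasDerivAt (eK k) ((-Complex.I * (k:ℂ)) * eK k x) x := by
  have h1 : HasDerivAt (fun x : ℝ => (x : ℂ)) 1 x := by
    exact ((hasDerivAt_id x).ofReal_comp).congr_deriv (by simp)
  have h2 : HasDerivAt (fun x : ℝ => -Complex.I * (k:ℂ) * (x:ℂ)) (-Complex.I * (k:ℂ)) x := by
    simpa using h1.const_mul (-Complex.I * (k:ℂ))
  have h3 := h2.cexp
  unfold eK
  convert h3 using 1
  ring

lemma eK_cont (k : ℤ) : Continuous (eK k) := by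
  unfold eK; fun_prop

lemma eK_periodic (k : ℤ) (x : ℝ) : eK k (x + T) = eK k x := by
  unfold eK
  push_cast
  rw [mul_add, Complex.exp_add]
  have : Complex.exp (-Complex.I * (k:ℂ) * (2*(π:ℂ))) = 1 := by
    have := Complex.exp_int_mul_two_pi_mul_I (-k)
    rw [← this]
    congr 1
    push_cast
    ring
  rw [this, mul_one]

/-- ∫ (deriv g) e_{-k} = i k ∫ g e_{-k}, hence HighModes is stable under deriv. -/
lemma highModes_deriv {n : ℕ} {g : ℝ → ℝ} (hg : Sm g) (h : HighModes n g) :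
    HighModes n (deriv g) := by
  intro k hk
  have hu : ∀ x ∈ Set.uIcc (0:ℝ) T, HasDerivAt (eK k) ((-Complex.I * (k:ℂ)) * eK k x) x :=
    fun x _ => eK_hasDerivAt k x
  have hv : ∀ x ∈ Set.uIcc (0:ℝ) T, HasDerivAt (fun y : ℝ => (g y : ℂ)) (Complex.ofReal (deriv g x)) x :=
    fun x _ => (hg.hasDerivAt x).ofReal_comp
  have hu' : IntervalIntegrable (fun x => (-Complex.I * (k:ℂ)) * eK k x) volume 0 T :=
    (Continuous.intervalIntegrable (continuous_const.mul (eK_cont k)) _ _)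
  have hv' : IntervalIntegrable (fun x => ((deriv g x : ℝ) : ℂ)) volume 0 T :=
    (Continuous.intervalIntegrable (by
      exact Complex.continuous_ofReal.comp ((contDiff_infty_iff_deriv.mp hg.smooth).2.continuous)) _ _)
  have hibp := intervalIntegral.integral_mul_deriv_eq_deriv_mul (a := 0) (b := T)
    hu hv hu' hv'
  have hb : eK k T * (g T : ℂ) - eK k 0 * (g 0 : ℂ) = 0 := by
    have h1 : eK k T = eK k 0 := by simpa using eK_periodic k 0
    have h2 : g T = g 0 := by simpa using hg.per 0
    rw [h1, h2, sub_self]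
  have hmain : (∫ x in (0:ℝ)..T, eK k x * Complex.ofReal (deriv g x))
      = -∫ x in (0:ℝ)..T, (-Complex.I * (k:ℂ)) * eK k x * (g x : ℂ) := by
    rw [hibp, hb, zero_sub]
  have hswap : (∫ x in (0:ℝ)..T, ((deriv g x : ℝ):ℂ) * eK k x)
      = ∫ x in (0:ℝ)..T, eK k x * ((deriv g x : ℝ):ℂ) := by
    simp_rw [mul_comm]
  have hrhs : (∫ x in (0:ℝ)..T, (-Complex.I * (k:ℂ)) * eK k x * (g x : ℂ))
      = (-Complex.I * (k:ℂ)) * ∫ x in (0:ℝ)..T, (g x : ℂ) * eK k x := by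
    rw [← intervalIntegral.integral_const_mul]
    congr 1; funext x; ring
  have h0 : (∫ x in (0:ℝ)..T, (g x : ℂ) * eK k x) = 0 := h k hk
  show (∫ x in (0:ℝ)..T, ((deriv g x : ℝ):ℂ) * eK k x) = 0
  rw [hswap, hmain, hrhs, h0, mul_zero, neg_zero]


lemma integral_mul_cos_sin {n : ℕ} {g : ℝ → ℝ} (hgc : Continuous g)
    (hh : HighModes n g) {k : ℕ} (hk : k ∈ Finset.Icc 1 n) :
    (∫ x in (0:ℝ)..T, g x * Real.cos (k*x)) = 0 ∧
    (∫ x in (0:ℝ)..T, g x * Real.sin (k*x)) = 0 := by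
  simp only [Finset.mem_Icc] at hk
  have hkn : |(k:ℤ)| ≤ (n:ℤ) := by
    rw [abs_of_nonneg (by positivity)]; exact_mod_cast hk.2
  have hkn' : |(-(k:ℤ))| ≤ (n:ℤ) := by rwa [abs_neg]
  have Ep := hh k hkn
  have Em := hh (-(k:ℤ)) hkn'
  -- rewrite Ep, Em in terms of eK
  have hEp : (∫ x in (0:ℝ)..T, (g x : ℂ) * eK k x) = 0 := by
    simpa [eK] using Ep
  have hEm : (∫ x in (0:ℝ)..T, (g x : ℂ) * eK (-(k:ℤ)) x) = 0 := by
    simpa [eK] using Em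
  have hint : ∀ m : ℤ, IntervalIntegrable (fun x => (g x : ℂ) * eK m x) volume 0 T :=
    fun m => ((Complex.continuous_ofReal.comp hgc).mul (eK_cont m)).intervalIntegrable _ _
  have he1 : ∀ x : ℝ, Complex.exp ((((k:ℝ)*x : ℝ):ℂ) * Complex.I) = eK (-(k:ℤ)) x := by
    intro x; unfold eK; congr 1; push_cast; ring
  have he2 : ∀ x : ℝ, Complex.exp (-(((k:ℝ)*x : ℝ):ℂ) * Complex.I) = eK (k:ℤ) x := by
    intro x; unfold eK; congr 1; push_cast; ring
  have hcosC : ∀ x : ℝ, Complex.cos ((k:ℂ) * (x:ℂ)) = (eK (-(k:ℤ)) x + eK k x) / 2 := by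
    intro x
    have h2 := Complex.two_cos (x := (((k:ℝ)*x : ℝ):ℂ))
    rw [he1 x, he2 x] at h2
    push_cast at h2
    linear_combination h2 / 2
  have hsinC : ∀ x : ℝ, Complex.sin ((k:ℂ) * (x:ℂ))
      = (eK k x - eK (-(k:ℤ)) x) * Complex.I / 2 := by
    intro x
    have h2 := Complex.two_sin (x := (((k:ℝ)*x : ℝ):ℂ))
    rw [he1 x, he2 x] at h2
    push_cast at h2
    linear_combination h2 / 2
  constructor
  · have hC : Complex.ofReal (∫ x in (0:ℝ)..T, g x * Real.cos ((k:ℝ)*x)) = 0 := by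
      rw [← intervalIntegral.integral_ofReal]
      have : ∀ x : ℝ, ((g x * Real.cos ((k:ℝ)*x) : ℝ) : ℂ)
          = (g x : ℂ) * eK (-(k:ℤ)) x / 2 + (g x : ℂ) * eK k x / 2 := by
        intro x
        push_cast
        rw [hcosC x]; ring
      simp_rw [this]
      rw [intervalIntegral.integral_add ((hint _).div_const 2) ((hint _).div_const 2)]
      rw [intervalIntegral.integral_div, intervalIntegral.integral_div, hEp, hEm]
      norm_num
    exact_mod_cast hC
  · have hC : Complex.ofReal (∫ x in (0:ℝ)..T, g x * Real.sin ((k:ℝ)*x)) = 0 := by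
      rw [← intervalIntegral.integral_ofReal]
      have : ∀ x : ℝ, ((g x * Real.sin ((k:ℝ)*x) : ℝ) : ℂ)
          = (g x : ℂ) * eK k x * Complex.I / 2 - (g x : ℂ) * eK (-(k:ℤ)) x * Complex.I / 2 := by
        intro x
        push_cast
        rw [hsinC x]; ring
      simp_rw [this]
      rw [intervalIntegral.integral_sub (((hint _).mul_const _).div_const 2)
        (((hint _).mul_const _).div_const 2)]
      rw [intervalIntegral.integral_div, intervalIntegral.integral_div,
        intervalIntegral.integral_mul_const, intervalIntegral.integral_mul_const, hEp, hEm]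
      norm_num
    exact_mod_cast hC

lemma orth {n : ℕ} {g : ℝ → ℝ} (hgc : Continuous g) (hh : HighModes n g)
    {p : ℝ → ℝ} (hp : InHn n p) :
    (∫ x in (0:ℝ)..T, g x * p x) = 0 := by
  obtain ⟨a, b, rfl⟩ := hp
  have h1 : ∀ x : ℝ, g x * (∑ k ∈ Finset.Icc 1 n, (a k * Real.cos (k*x) + b k * Real.sin (k*x)))
      = ∑ k ∈ Finset.Icc 1 n, (a k * (g x * Real.cos (k*x)) + b k * (g x * Real.sin (k*x))) := by
    intro x
    rw [Finset.mul_sum]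
    congr 1; funext k; ring
  simp_rw [h1]
  rw [intervalIntegral.integral_finset_sum]
  · apply Finset.sum_eq_zero
    intro k hk
    obtain ⟨hc, hs⟩ := integral_mul_cos_sin hgc hh hk
    have ic : IntervalIntegrable (fun x => g x * Real.cos ((k:ℝ)*x)) volume 0 T :=
      (hgc.mul (by fun_prop)).intervalIntegrable _ _
    have is : IntervalIntegrable (fun x => g x * Real.sin ((k:ℝ)*x)) volume 0 T :=
      (hgc.mul (by fun_prop)).intervalIntegrable _ _
    rw [intervalIntegral.integral_add (ic.const_mul _) (is.const_mul _),
      intervalIntegral.integral_const_mul, intervalIntegral.integral_const_mul, hc, hs]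
    ring
  · intro k _
    apply Continuous.intervalIntegrable
    fun_prop


lemma deriv_integral_eK {g : ℝ → ℝ} (hg : Sm g) (k : ℤ) :
    (∫ x in (0:ℝ)..T, ((deriv g x : ℝ) : ℂ) * eK k x)
      = (Complex.I * (k:ℂ)) * ∫ x in (0:ℝ)..T, ((g x : ℝ) : ℂ) * eK k x := by
  have hu : ∀ x ∈ Set.uIcc (0:ℝ) T, HasDerivAt (eK k) ((-Complex.I * (k:ℂ)) * eK k x) x :=
    fun x _ => eK_hasDerivAt k x
  have hv : ∀ x ∈ Set.uIcc (0:ℝ) T,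
      HasDerivAt (fun y : ℝ => ((g y : ℝ) : ℂ)) (Complex.ofReal (_root_.deriv g x)) x :=
    fun x _ => (hg.hasDerivAt x).ofReal_comp
  have hu' : IntervalIntegrable (fun x => (-Complex.I * (k:ℂ)) * eK k x) volume 0 T :=
    (Continuous.intervalIntegrable (continuous_const.mul (eK_cont k)) _ _)
  have hv' : IntervalIntegrable (fun x => ((_root_.deriv g x : ℝ) : ℂ)) volume 0 T :=
    (Continuous.intervalIntegrable
      (Complex.continuous_ofReal.comp hg.deriv.cont) _ _)
  have hibp := intervalIntegral.integral_mul_deriv_eq_deriv_mul (a := 0) (b := T) hu hv hu' hv'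
  have hb : eK k T * ((g T : ℝ):ℂ) - eK k 0 * ((g 0 : ℝ):ℂ) = 0 := by
    have h1 : eK k T = eK k 0 := by simpa using eK_periodic k 0
    have h2 : g T = g 0 := by simpa using hg.per 0
    rw [h1, h2, sub_self]
  have hmain : (∫ x in (0:ℝ)..T, eK k x * Complex.ofReal (_root_.deriv g x))
      = -∫ x in (0:ℝ)..T, (-Complex.I * (k:ℂ)) * eK k x * ((g x : ℝ):ℂ) := by
    rw [hibp, hb, zero_sub]
  have hswap : (∫ x in (0:ℝ)..T, ((_root_.deriv g x : ℝ):ℂ) * eK k x)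
      = ∫ x in (0:ℝ)..T, eK k x * ((_root_.deriv g x : ℝ):ℂ) := by
    simp_rw [mul_comm]
  have hrhs : (∫ x in (0:ℝ)..T, (-Complex.I * (k:ℂ)) * eK k x * ((g x:ℝ) : ℂ))
      = (-Complex.I * (k:ℂ)) * ∫ x in (0:ℝ)..T, ((g x:ℝ) : ℂ) * eK k x := by
    rw [← intervalIntegral.integral_const_mul]
    congr 1; funext x; ring
  rw [hswap, hmain, hrhs]
  ring

section parseval

instance factT : Fact ((0:ℝ) < T) := ⟨T_pos⟩

/-- the continuous map on the circle obtained from a periodic real function (as complex). -/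
noncomputable def circ {g : ℝ → ℝ} (hg : Sm g) : C(AddCircle T, ℂ) :=
  ⟨Function.Periodic.lift (f := fun x => ((g x : ℝ) : ℂ)) (fun x => by
      simp [hg.per x]), by
    unfold Function.Periodic.lift
    exact (Complex.continuous_ofReal.comp hg.cont).quotient_liftOn' _⟩

lemma circ_coe {g : ℝ → ℝ} (hg : Sm g) (x : ℝ) : circ hg (x : AddCircle T) = ((g x : ℝ) : ℂ) :=
  rfl

lemma fourier_eq_eK (k : ℤ) (x : ℝ) : @fourier T (-k) (x : AddCircle T) = eK k x := by
  rw [fourier_coe_apply]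
  unfold eK
  congr 1
  have hπ : (π:ℂ) ≠ 0 := Complex.ofReal_ne_zero.mpr Real.pi_ne_zero
  field_simp [T]
  push_cast; ring

/-- Fourier coefficient of the circle lift as an interval integral against eK. -/
lemma fourierCoeff_circ {g : ℝ → ℝ} (hg : Sm g) (k : ℤ) :
    fourierCoeff (⇑(circ hg)) k = (1/T : ℝ) • ∫ x in (0:ℝ)..T, eK k x * ((g x : ℝ) : ℂ) := by
  rw [fourierCoeff_eq_intervalIntegral _ k 0, zero_add]
  congr 1
  apply intervalIntegral.integral_congr
  intro x _
  show (fourier (-k)) (x : AddCircle T) • (circ hg) (x : AddCircle T) = eK k x * ((g x : ℝ):ℂ)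
  rw [smul_eq_mul, circ_coe hg, fourier_eq_eK]

lemma fourierCoeff_circ_deriv {g : ℝ → ℝ} (hg : Sm g) (hg' : Sm (deriv g)) (k : ℤ) :
    fourierCoeff (⇑(circ hg')) k = (Complex.I * (k:ℂ)) * fourierCoeff (⇑(circ hg)) k := by
  rw [fourierCoeff_circ hg', fourierCoeff_circ hg]
  have h1 : (∫ x in (0:ℝ)..T, eK k x * ((deriv g x : ℝ) : ℂ))
      = (Complex.I * (k:ℂ)) * ∫ x in (0:ℝ)..T, eK k x * ((g x : ℝ) : ℂ) := by
    have := deriv_integral_eK hg k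
    simp_rw [mul_comm (eK k _)]
    exact this
  rw [h1, Complex.real_smul, Complex.real_smul]
  ring

/-- Parseval for the circle lift, with summability. -/
lemma parseval_circ {g : ℝ → ℝ} (hg : Sm g) :
    (∑' k : ℤ, ‖fourierCoeff (⇑(circ hg)) k‖^2) = (1/T) * ∫ x in (0:ℝ)..T, (g x)^2 ∧
    Summable (fun k : ℤ => ‖fourierCoeff (⇑(circ hg)) k‖^2) := by
  set FL := ContinuousMap.toLp (E := ℂ) 2 haarAddCircle ℂ (circ hg) with hFL
  have hcoeff : ∀ k : ℤ, fourierCoeff (FL : AddCircle T → ℂ) k = fourierCoeff (⇑(circ hg)) k :=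
    fun k => fourierCoeff_toLp (circ hg) k
  constructor
  · have hpars := tsum_sq_fourierCoeff FL
    have h2 : (∫ t : AddCircle T, ‖(FL : AddCircle T → ℂ) t‖^2 ∂haarAddCircle)
        = ∫ t : AddCircle T, ‖(circ hg) t‖^2 ∂haarAddCircle := by
      apply MeasureTheory.integral_congr_ae
      filter_upwards [ContinuousMap.coeFn_toLp (p := 2) (𝕜 := ℂ) haarAddCircle (circ hg)] with t ht
      rw [ht]
    have h3 : (1/T) * (∫ t : AddCircle T, ‖(circ hg) t‖^2)
        = ∫ t : AddCircle T, ‖(circ hg) t‖^2 ∂haarAddCircle := by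
      rw [show (volume : Measure (AddCircle T)) = ENNReal.ofReal T • haarAddCircle from
        volume_eq_smul_haarAddCircle, MeasureTheory.integral_smul_measure,
        ENNReal.toReal_ofReal T_pos.le, smul_eq_mul, ← mul_assoc]
      field_simp
    have h4 : (∫ t : AddCircle T, ‖(circ hg) t‖^2) = ∫ x in (0:ℝ)..T, (g x)^2 := by
      rw [← AddCircle.intervalIntegral_preimage T 0 (fun t => ‖(circ hg) t‖^2)]
      simp only [zero_add]
      apply intervalIntegral.integral_congr
      intro x _
      show ‖(circ hg) (x : AddCircle T)‖^2 = (g x)^2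
      rw [circ_coe hg]
      simp [sq_abs]
    simp_rw [hcoeff] at hpars
    rw [hpars, h2, ← h3, h4]
  · have hmem := lp.memℓp (fourierBasis.repr FL)
    have hsum := hmem.summable (by norm_num : (0:ℝ) < (2 : ENNReal).toReal)
    have : (fun k : ℤ => ‖fourierBasis.repr FL k‖ ^ (2 : ENNReal).toReal)
        = fun k : ℤ => ‖fourierCoeff (⇑(circ hg)) k‖^2 := by
      funext k
      rw [fourierBasis_repr, hcoeff k]
      rw [show ((2:ENNReal).toReal) = ((2:ℕ):ℝ) by norm_num, Real.rpow_natCast]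
    rwa [this] at hsum

end parseval

/-- The spectral gap inequality. -/
lemma spectral {n : ℕ} (hn : 1 ≤ n) {g : ℝ → ℝ} (hg : Sm g) (hh : HighModes n g) :
    (∫ x in (0:ℝ)..T, (g x)^2) ≤ (1/(n:ℝ)^2) * ∫ x in (0:ℝ)..T, (deriv g x)^2 := by
  have hd : ∀ k : ℤ, fourierCoeff (⇑(circ hg.deriv)) k
      = (Complex.I * (k:ℂ)) * fourierCoeff (⇑(circ hg)) k :=
    fourierCoeff_circ_deriv hg hg.deriv
  have hc0 : ∀ k : ℤ, |k| ≤ (n:ℤ) → fourierCoeff (⇑(circ hg)) k = 0 := by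
    intro k hk
    rw [fourierCoeff_circ hg k]
    have h0 : (∫ x in (0:ℝ)..T, eK k x * ((g x : ℝ):ℂ)) = 0 := by
      have := hh k hk
      simp_rw [mul_comm (eK k _)]
      simpa [eK] using this
    rw [h0, smul_zero]
  obtain ⟨hPg, hSg⟩ := parseval_circ hg
  obtain ⟨hPd, hSd⟩ := parseval_circ hg.deriv
  have hnpos : (0:ℝ) < (n:ℝ) := by exact_mod_cast hn
  have hterm : ∀ k : ℤ, ‖fourierCoeff (⇑(circ hg)) k‖^2
      ≤ (1/(n:ℝ)^2) * ‖fourierCoeff (⇑(circ hg.deriv)) k‖^2 := by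
    intro k
    have hnorm : ‖fourierCoeff (⇑(circ hg.deriv)) k‖^2
        = ((k:ℝ))^2 * ‖fourierCoeff (⇑(circ hg)) k‖^2 := by
      rw [hd k, norm_mul, norm_mul, Complex.norm_I, one_mul, mul_pow]
      congr 1
      rw [show ((k:ℂ)) = (((k:ℝ)):ℂ) by push_cast; ring, Complex.norm_real,
        Real.norm_eq_abs, sq_abs]
    by_cases hk : |k| ≤ (n:ℤ)
    · rw [hc0 k hk]
      simp only [norm_zero]
      rw [zero_pow (by norm_num : (2:ℕ) ≠ 0)]
      positivity
    · push_neg at hk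
      have hk1 : (n:ℤ) + 1 ≤ |k| := hk
      have hk2 : (n:ℝ) ≤ |(k:ℝ)| := by
        rw [← Int.cast_abs]
        exact_mod_cast le_trans (by omega) hk1
      have hk3 : (n:ℝ)^2 ≤ (k:ℝ)^2 := by
        rw [← sq_abs (k:ℝ)]
        exact pow_le_pow_left₀ hnpos.le hk2 2
      rw [hnorm]
      rw [div_mul_eq_mul_div, one_mul, le_div_iff₀ (by positivity)]
      nlinarith [sq_nonneg ‖fourierCoeff (⇑(circ hg)) k‖]
  have hsum := Summable.tsum_le_tsum hterm hSg (hSd.mul_left _)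
  rw [tsum_mul_left, hPg, hPd] at hsum
  have hTpos := T_pos
  have e1 : (1:ℝ)/(n:ℝ)^2 * (1/T * (∫ x in (0:ℝ)..T, _root_.deriv g x ^2))
      = 1/T * (1/(n:ℝ)^2 * (∫ x in (0:ℝ)..T, _root_.deriv g x ^2)) := by ring
  rw [e1] at hsum
  have h2 := mul_le_mul_of_nonneg_left hsum hTpos.le
  rw [← mul_assoc, mul_one_div, div_self hTpos.ne', one_mul, ← mul_assoc, mul_one_div,
    div_self hTpos.ne', one_mul] at h2
  exact h2


lemma cauchy_schwarz_abs {f g : ℝ → ℝ} (hf : Continuous f) (hg : Continuous g) :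
    |∫ x in (0:ℝ)..T, f x * g x| ≤
      Real.sqrt (∫ x in (0:ℝ)..T, (f x)^2) * Real.sqrt (∫ x in (0:ℝ)..T, (g x)^2) := by
  rw [abs_le]
  constructor
  · have h := cauchy_schwarz (f := fun x => -f x) (hf.neg) hg
    have e1 : (∫ x in (0:ℝ)..T, (-f x) * g x) = -∫ x in (0:ℝ)..T, f x * g x := by
      rw [← intervalIntegral.integral_neg]
      congr 1; funext x; ring
    have e2 : (∫ x in (0:ℝ)..T, (-f x)^2) = ∫ x in (0:ℝ)..T, (f x)^2 := by
      congr 1; funext x; ring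
    rw [e1, e2] at h
    linarith
  · exact cauchy_schwarz hf hg

lemma abs_le_supNorm {f : ℝ → ℝ} (hf : Continuous f) {x : ℝ} (hx : x ∈ Set.Icc (0:ℝ) T) :
    |f x| ≤ supNorm f := by
  apply le_csSup
  · exact (isCompact_Icc.image hf.abs).bddAbove
  · exact ⟨x, hx, rfl⟩

lemma supNorm_nonneg {f : ℝ → ℝ} (hf : Continuous f) : 0 ≤ supNorm f :=
  le_trans (abs_nonneg (f 0)) (abs_le_supNorm hf ⟨le_refl 0, T_pos.le⟩)

lemma weighted_L2_bound {w f : ℝ → ℝ} (hw : Continuous w) (hf : Continuous f) :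
    Real.sqrt (∫ x in (0:ℝ)..T, (w x * f x)^2)
      ≤ supNorm w * Real.sqrt (∫ x in (0:ℝ)..T, (f x)^2) := by
  have hmono : (∫ x in (0:ℝ)..T, (w x * f x)^2)
      ≤ ∫ x in (0:ℝ)..T, (supNorm w)^2 * (f x)^2 := by
    apply intervalIntegral.integral_mono_on T_pos.le
    · exact (((hw.mul hf).pow 2).intervalIntegrable _ _)
    · exact ((continuous_const.mul (hf.pow 2)).intervalIntegrable _ _)
    · intro x hx
      have h1 : |w x| ≤ supNorm w := abs_le_supNorm hw hx
      have h2 : (w x * f x)^2 = (w x)^2 * (f x)^2 := by ring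
      rw [h2]
      apply mul_le_mul_of_nonneg_right _ (sq_nonneg _)
      calc (w x)^2 = |w x|^2 := (sq_abs _).symm
        _ ≤ (supNorm w)^2 := pow_le_pow_left₀ (abs_nonneg _) h1 2
  calc Real.sqrt (∫ x in (0:ℝ)..T, (w x * f x)^2)
      ≤ Real.sqrt (∫ x in (0:ℝ)..T, (supNorm w)^2 * (f x)^2) := Real.sqrt_le_sqrt hmono
    _ = supNorm w * Real.sqrt (∫ x in (0:ℝ)..T, (f x)^2) := by
        rw [intervalIntegral.integral_const_mul, Real.sqrt_mul (sq_nonneg _),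
          Real.sqrt_sq (supNorm_nonneg hw)]

lemma weighted_bound {w f g : ℝ → ℝ} (hw : Continuous w) (hf : Continuous f)
    (hg : Continuous g) :
    |∫ x in (0:ℝ)..T, (w x * f x) * g x|
      ≤ supNorm w * Real.sqrt (∫ x in (0:ℝ)..T, (f x)^2)
        * Real.sqrt (∫ x in (0:ℝ)..T, (g x)^2) := by
  calc |∫ x in (0:ℝ)..T, (w x * f x) * g x|
      ≤ Real.sqrt (∫ x in (0:ℝ)..T, (w x * f x)^2)
        * Real.sqrt (∫ x in (0:ℝ)..T, (g x)^2) := cauchy_schwarz_abs (hw.mul hf) hg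
    _ ≤ supNorm w * Real.sqrt (∫ x in (0:ℝ)..T, (f x)^2)
        * Real.sqrt (∫ x in (0:ℝ)..T, (g x)^2) :=
        mul_le_mul_of_nonneg_right (weighted_L2_bound hw hf) (Real.sqrt_nonneg _)

lemma spectral_sqrt {n : ℕ} (hn : 1 ≤ n) {g : ℝ → ℝ} (hg : Sm g) (hh : HighModes n g) :
    Real.sqrt (∫ x in (0:ℝ)..T, (g x)^2)
      ≤ (1/(n:ℝ)) * Real.sqrt (∫ x in (0:ℝ)..T, (_root_.deriv g x)^2) := by
  have h := spectral hn hg hh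
  have hnpos : (0:ℝ) < (n:ℝ) := by exact_mod_cast hn
  calc Real.sqrt (∫ x in (0:ℝ)..T, (g x)^2)
      ≤ Real.sqrt ((1/(n:ℝ)^2) * ∫ x in (0:ℝ)..T, (_root_.deriv g x)^2) := Real.sqrt_le_sqrt h
    _ = (1/(n:ℝ)) * Real.sqrt (∫ x in (0:ℝ)..T, (_root_.deriv g x)^2) := by
        rw [Real.sqrt_mul (by positivity)]
        congr 1
        rw [show (1:ℝ)/(n:ℝ)^2 = ((1/(n:ℝ)))^2 by ring, Real.sqrt_sq (by positivity)]

lemma sm_of_inHn {n : ℕ} {p : ℝ → ℝ} (hp : InHn n p) : Sm p := by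
  obtain ⟨a, b, rfl⟩ := hp
  constructor
  · apply ContDiff.sum
    intro k _
    have hc : ContDiff ℝ ∞ fun x : ℝ => Real.cos ((k:ℝ)*x) :=
      Real.contDiff_cos.comp (contDiff_const.mul contDiff_id)
    have hs : ContDiff ℝ ∞ fun x : ℝ => Real.sin ((k:ℝ)*x) :=
      Real.contDiff_sin.comp (contDiff_const.mul contDiff_id)
    exact (contDiff_const.mul hc).add (contDiff_const.mul hs)
  · intro x
    simp only
    apply Finset.sum_congr rfl
    intro k _
    have harg : (k:ℝ)*(x + T) = (k:ℝ)*x + (k:ℤ)*(2*π) := by push_cast; ring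
    rw [harg, Real.cos_add_int_mul_two_pi, Real.sin_add_int_mul_two_pi]


end Stmt10Aux

/-- second mixed-term estimate:
⟨A_φ q, p⟩ ≤ (2‖φ_xx‖_∞ + 2‖φ_x‖_∞)·(1/n)·‖q_xx‖·‖p_xx‖. -/
theorem stmt10 (φ : ℝ → ℝ) (hφ : ContDiff ℝ (⊤ : ℕ∞) φ) (hφp : Function.Periodic φ (2*Real.pi))
    (n : ℕ) (hn : 1 ≤ n) (p : ℝ → ℝ) (hp : InHn n p)
    (q : ℝ → ℝ) (hq : ContDiff ℝ (⊤ : ℕ∞) q) (hqp : Function.Periodic q (2*Real.pi))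
    (hmean : (∫ x in (0:ℝ)..(2*Real.pi), q x) = 0)
    (hhigh : HighModes n q) :
    L2inner (Aop φ q) p ≤
      (2 * supNorm (iteratedDeriv 2 φ) + 2 * supNorm (deriv φ))
      * (1/(n:ℝ)) * L2norm (iteratedDeriv 2 q) * L2norm (iteratedDeriv 2 p) := by
  open Stmt10Aux in
  have Sq : Sm q := ⟨hq.of_le (by simp), hqp⟩
  have Sφ : Sm φ := ⟨hφ.of_le (by simp), hφp⟩
  have Sp : Sm p := sm_of_inHn hp
  have Sh : Sm (fun y => deriv φ y * q y) := Sφ.deriv.mul Sq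
  set h : ℝ → ℝ := fun y => deriv φ y * q y with hh_def
  -- iterated derivatives as repeated derivs
  have e4 : iteratedDeriv 4 q = deriv (deriv (deriv (deriv q))) := by
    rw [iteratedDeriv_eq_iterate]; rfl
  have e3 : iteratedDeriv 3 h = deriv (deriv (deriv h)) := by
    rw [iteratedDeriv_eq_iterate]; rfl
  have e2q : iteratedDeriv 2 q = deriv (deriv q) := by
    rw [iteratedDeriv_eq_iterate]; rfl
  have e2p : iteratedDeriv 2 p = deriv (deriv p) := by
    rw [iteratedDeriv_eq_iterate]; rfl
  have e2φ : iteratedDeriv 2 φ = deriv (deriv φ) := by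
    rw [iteratedDeriv_eq_iterate]; rfl
  -- split the integral
  have hsplit : L2inner (Aop φ q) p
      = -(∫ x in (0:ℝ)..T, deriv (deriv (deriv (deriv q))) x * p x)
        - 2 * ∫ x in (0:ℝ)..T, deriv (deriv (deriv h)) x * p x := by
    unfold L2inner Aop
    rw [← hh_def, e4, e3]
    have hint1 : IntervalIntegrable (fun x => deriv (deriv (deriv (deriv q))) x * p x)
        volume 0 T :=
      ((Sq.deriv.deriv.deriv.deriv.cont.mul Sp.cont).intervalIntegrable _ _)
    have hint2 : IntervalIntegrable (fun x => 2 * (deriv (deriv (deriv h)) x * p x))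
        volume 0 T :=
      ((continuous_const.mul (Sh.deriv.deriv.deriv.cont.mul Sp.cont)).intervalIntegrable _ _)
    have hptw : ∀ x : ℝ, (-(deriv (deriv (deriv (deriv q))) x) - 2 * deriv (deriv (deriv h)) x) * p x
        = -(deriv (deriv (deriv (deriv q))) x * p x) - 2 * (deriv (deriv (deriv h)) x * p x) := by
      intro x; ring
    simp_rw [hptw]
    have hint1' : IntervalIntegrable (fun x => -(deriv (deriv (deriv (deriv q))) x * p x))
        volume 0 T :=
      (((Sq.deriv.deriv.deriv.deriv.cont.mul Sp.cont).neg).intervalIntegrable _ _)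
    rw [intervalIntegral.integral_sub hint1' hint2, intervalIntegral.integral_neg,
      intervalIntegral.integral_const_mul]
  -- term 1 vanishes
  have hq4high : HighModes n (deriv (deriv (deriv (deriv q)))) :=
    highModes_deriv Sq.deriv.deriv.deriv
      (highModes_deriv Sq.deriv.deriv (highModes_deriv Sq.deriv (highModes_deriv Sq hhigh)))
  have hterm1 : (∫ x in (0:ℝ)..T, deriv (deriv (deriv (deriv q))) x * p x) = 0 :=
    orth Sq.deriv.deriv.deriv.deriv.cont hq4high hp
  -- integrate term 2 by parts twice
  have hibp1 : (∫ x in (0:ℝ)..T, deriv (deriv (deriv h)) x * p x)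
      = -∫ x in (0:ℝ)..T, deriv (deriv h) x * deriv p x := by
    have := ibp Sh.deriv.deriv Sp
    linarith [this]
  have hibp2 : (∫ x in (0:ℝ)..T, deriv (deriv h) x * deriv p x)
      = -∫ x in (0:ℝ)..T, deriv h x * deriv (deriv p) x := by
    have := ibp Sh.deriv Sp.deriv
    linarith [this]
  -- expand deriv h
  have hderiv_h : ∀ x : ℝ, deriv h x = deriv (deriv φ) x * q x + deriv φ x * deriv q x := by
    intro x
    rw [hh_def]
    rw [deriv_fun_mul (Sφ.deriv.smooth.differentiable (by simp) x)
      (Sq.smooth.differentiable (by simp) x)]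
  -- the two pieces
  have hsum2 : (∫ x in (0:ℝ)..T, deriv h x * deriv (deriv p) x)
      = (∫ x in (0:ℝ)..T, (deriv (deriv φ) x * q x) * deriv (deriv p) x)
        + ∫ x in (0:ℝ)..T, (deriv φ x * deriv q x) * deriv (deriv p) x := by
    rw [← intervalIntegral.integral_add
      (f := fun x => (deriv (deriv φ) x * q x) * deriv (deriv p) x)
      (g := fun x => (deriv φ x * deriv q x) * deriv (deriv p) x)
      (((Sφ.deriv.deriv.cont.mul Sq.cont).mul Sp.deriv.deriv.cont).intervalIntegrable _ _)
      (((Sφ.deriv.cont.mul Sq.deriv.cont).mul Sp.deriv.deriv.cont).intervalIntegrable _ _)]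
    apply intervalIntegral.integral_congr
    intro x _
    simp only [hderiv_h x]
    ring
  set X := ∫ x in (0:ℝ)..T, (deriv (deriv φ) x * q x) * deriv (deriv p) x with hX
  set Y := ∫ x in (0:ℝ)..T, (deriv φ x * deriv q x) * deriv (deriv p) x with hY
  have hL : L2inner (Aop φ q) p = -2 * (X + Y) := by
    rw [hsplit, hterm1, hibp1, hibp2, hsum2]
    ring
  -- bounds
  set Lq := Real.sqrt (∫ x in (0:ℝ)..T, (q x)^2) with hLq_def
  set Lq1 := Real.sqrt (∫ x in (0:ℝ)..T, (deriv q x)^2) with hLq1_def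
  set Lq2 := Real.sqrt (∫ x in (0:ℝ)..T, (deriv (deriv q) x)^2) with hLq2_def
  set Lp2 := Real.sqrt (∫ x in (0:ℝ)..T, (deriv (deriv p) x)^2) with hLp2_def
  set N1 := supNorm (deriv φ) with hN1_def
  set N2 := supNorm (deriv (deriv φ)) with hN2_def
  have hXb : |X| ≤ N2 * Lq * Lp2 :=
    weighted_bound Sφ.deriv.deriv.cont Sq.cont Sp.deriv.deriv.cont
  have hYb : |Y| ≤ N1 * Lq1 * Lp2 :=
    weighted_bound Sφ.deriv.cont Sq.deriv.cont Sp.deriv.deriv.cont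
  have hq_spec : Lq ≤ (1/(n:ℝ)) * Lq1 := spectral_sqrt hn Sq hhigh
  have hq1_spec : Lq1 ≤ (1/(n:ℝ)) * Lq2 := spectral_sqrt hn Sq.deriv (highModes_deriv Sq hhigh)
  have hnpos : (0:ℝ) < (n:ℝ) := by exact_mod_cast hn
  have hninv : (0:ℝ) < 1/(n:ℝ) := by positivity
  have hninv1 : 1/(n:ℝ) ≤ 1 := by
    rw [div_le_one hnpos]; exact_mod_cast hn
  have hLq2nn : 0 ≤ Lq2 := Real.sqrt_nonneg _
  have hLp2nn : 0 ≤ Lp2 := Real.sqrt_nonneg _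
  have hLqnn : 0 ≤ Lq := Real.sqrt_nonneg _
  have hLq1nn : 0 ≤ Lq1 := Real.sqrt_nonneg _
  have hN1nn : 0 ≤ N1 := supNorm_nonneg Sφ.deriv.cont
  have hN2nn : 0 ≤ N2 := supNorm_nonneg Sφ.deriv.deriv.cont
  have hq_chain : Lq ≤ (1/(n:ℝ)) * Lq2 := by nlinarith
  -- final assembly
  have hfinal : -2 * (X + Y) ≤ (2 * N2 + 2 * N1) * (1/(n:ℝ)) * Lq2 * Lp2 := by
    have h1 : -2 * (X + Y) ≤ 2 * |X| + 2 * |Y| := by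
      have := abs_le.mp (le_refl |X|)
      have hx := neg_abs_le X
      have hy := neg_abs_le Y
      linarith
    have h2 : |X| ≤ N2 * ((1/(n:ℝ)) * Lq2) * Lp2 := by
      refine le_trans hXb ?_
      apply mul_le_mul_of_nonneg_right _ hLp2nn
      exact mul_le_mul_of_nonneg_left hq_chain hN2nn
    have h3 : |Y| ≤ N1 * ((1/(n:ℝ)) * Lq2) * Lp2 := by
      refine le_trans hYb ?_
      apply mul_le_mul_of_nonneg_right _ hLp2nn
      exact mul_le_mul_of_nonneg_left hq1_spec hN1nn
    nlinarith [h1, h2, h3]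
  rw [hL, e2φ, e2q, e2p]
  unfold L2norm
  exact hfinal
end

section
/- Let d and φ be smooth 2π-periodic functions with zero mean and let ε > 0. Then |2⟨d_xx, (d_x φ_x)_xx⟩| ≤ ε ‖d_xxx‖² + (9/(4ε)) ‖φ_xx‖_∞² ‖d_x‖². -/
open MeasureTheory Real Filter
open scoped ContDiff

lemma perDeriv {f : ℝ → ℝ} (hf : Function.Periodic f (2*Real.pi)) :
    Function.Periodic (deriv f) (2*Real.pi) := by
  intro x
  have : (fun y => f (y + 2*Real.pi)) = f := funext fun y => hf y
  calc deriv f (x + 2*Real.pi) = deriv (fun y => f (y + 2*Real.pi)) x :=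
        (deriv_comp_add_const ..).symm
    _ = deriv f x := by rw [this]

lemma cdDeriv {f : ℝ → ℝ} (hf : ContDiff ℝ ∞ f) : ContDiff ℝ ∞ (deriv f) :=
  (contDiff_infty_iff_deriv.mp hf).2

lemma ibp_s12 (u v : ℝ → ℝ) (hu : ContDiff ℝ ∞ u) (hv : ContDiff ℝ ∞ v)
    (hup : Function.Periodic u (2*Real.pi)) (hvp : Function.Periodic v (2*Real.pi)) :
    ∫ x in (0:ℝ)..(2*Real.pi), u x * deriv v x
      = - ∫ x in (0:ℝ)..(2*Real.pi), deriv u x * v x := by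
  have h1 : ∀ x ∈ Set.uIcc (0:ℝ) (2*Real.pi), HasDerivAt u (deriv u x) x :=
    fun x _ => (hu.differentiable (by norm_num) x).hasDerivAt
  have h2 : ∀ x ∈ Set.uIcc (0:ℝ) (2*Real.pi), HasDerivAt v (deriv v x) x :=
    fun x _ => (hv.differentiable (by norm_num) x).hasDerivAt
  have h3 : IntervalIntegrable (deriv u) volume 0 (2*Real.pi) :=
    (cdDeriv hu).continuous.intervalIntegrable _ _
  have h4 : IntervalIntegrable (deriv v) volume 0 (2*Real.pi) :=
    (cdDeriv hv).continuous.intervalIntegrable _ _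
  have key := intervalIntegral.integral_deriv_mul_eq_sub h1 h2 h3 h4
  have hub : u (2*Real.pi) = u 0 := by have := hup 0; simpa using this
  have hvb : v (2*Real.pi) = v 0 := by have := hvp 0; simpa using this
  rw [hub, hvb, sub_self] at key
  have hsplit : (∫ x in (0:ℝ)..(2*Real.pi), deriv u x * v x + u x * deriv v x)
      = (∫ x in (0:ℝ)..(2*Real.pi), deriv u x * v x)
        + ∫ x in (0:ℝ)..(2*Real.pi), u x * deriv v x :=
    intervalIntegral.integral_add
      (((cdDeriv hu).continuous.mul hv.continuous).intervalIntegrable _ _)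
      ((hu.continuous.mul (cdDeriv hv).continuous).intervalIntegrable _ _)
  rw [hsplit] at key
  linarith

lemma cs (f g : ℝ → ℝ) (hf : Continuous f) (hg : Continuous g) :
    |∫ x in (0:ℝ)..(2*Real.pi), f x * g x| ≤ L2norm f * L2norm g := by
  set A := ∫ x in (0:ℝ)..(2*Real.pi), (f x)^2 with hA
  set B := ∫ x in (0:ℝ)..(2*Real.pi), (g x)^2 with hB
  set C := ∫ x in (0:ℝ)..(2*Real.pi), f x * g x with hC
  have hpi : (0:ℝ) ≤ 2*Real.pi := by positivity
  have hAnn : 0 ≤ A := intervalIntegral.integral_nonneg hpi (fun x _ => sq_nonneg _)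
  have hBnn : 0 ≤ B := intervalIntegral.integral_nonneg hpi (fun x _ => sq_nonneg _)
  have hquad : ∀ t : ℝ, 0 ≤ B * (t*t) + (2*C) * t + A := by
    intro t
    have hnn : 0 ≤ ∫ x in (0:ℝ)..(2*Real.pi), (f x + t * g x)^2 :=
      intervalIntegral.integral_nonneg hpi (fun x _ => sq_nonneg _)
    have hexp : (∫ x in (0:ℝ)..(2*Real.pi), (f x + t * g x)^2)
        = B * (t*t) + (2*C) * t + A := by
      have : ∀ x : ℝ, (f x + t * g x)^2
          = (t*t) * (g x)^2 + (2*t) * (f x * g x) + (f x)^2 := by intro x; ring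
      simp_rw [this]
      rw [intervalIntegral.integral_add, intervalIntegral.integral_add,
        intervalIntegral.integral_const_mul, intervalIntegral.integral_const_mul]
      · ring
      · exact ((continuous_const.mul (hg.pow 2)).intervalIntegrable _ _)
      · exact ((continuous_const.mul (hf.mul hg)).intervalIntegrable _ _)
      · exact (((continuous_const.mul (hg.pow 2)).add
          (continuous_const.mul (hf.mul hg))).intervalIntegrable _ _)
      · exact ((hf.pow 2).intervalIntegrable _ _)
    linarith [hexp ▸ hnn]
  have hd := discrim_le_zero hquad
  rw [discrim] at hd
  have hC2 : C^2 ≤ A * B := by nlinarith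
  have h1 : |C| = Real.sqrt (C^2) := (Real.sqrt_sq_eq_abs C).symm
  have h2 : L2norm f * L2norm g = Real.sqrt (A * B) := by
    rw [L2norm, L2norm, ← Real.sqrt_mul hAnn]
  rw [h1, h2]
  exact Real.sqrt_le_sqrt hC2

/-- |2⟨d_xx, (d_x φ_x)_xx⟩| ≤ ε‖d_xxx‖² + (9/(4ε))‖φ_xx‖_∞²‖d_x‖². -/
theorem stmt12 (d φ : ℝ → ℝ) (hd : InH d) (hφ : InH φ) (ε : ℝ) (hε : 0 < ε) :
    |2 * L2inner (iteratedDeriv 2 d)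
        (iteratedDeriv 2 (fun x => deriv d x * deriv φ x))| ≤
      ε * (L2norm (iteratedDeriv 3 d))^2
      + (9/(4*ε)) * (supNorm (iteratedDeriv 2 φ))^2 * (L2norm (deriv d))^2 := by
  obtain ⟨hds', hdp, -⟩ := hd
  obtain ⟨hφs', hφp, -⟩ := hφ
  have hds : ContDiff ℝ ∞ d := hds'.of_le (by simp)
  have hφs : ContDiff ℝ ∞ φ := hφs'.of_le (by simp)
  have hpi : (0:ℝ) ≤ 2*Real.pi := by positivity
  set d1 := deriv d with hd1
  set d2 := deriv d1 with hd2
  set d3 := deriv d2 with hd3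
  set φ1 := deriv φ with hφ1
  set φ2 := deriv φ1 with hφ2
  have sd1 : ContDiff ℝ ∞ d1 := cdDeriv hds
  have sd2 : ContDiff ℝ ∞ d2 := cdDeriv sd1
  have sd3 : ContDiff ℝ ∞ d3 := cdDeriv sd2
  have sφ1 : ContDiff ℝ ∞ φ1 := cdDeriv hφs
  have sφ2 : ContDiff ℝ ∞ φ2 := cdDeriv sφ1
  have pd1 : Function.Periodic d1 (2*Real.pi) := perDeriv hdp
  have pd2 : Function.Periodic d2 (2*Real.pi) := perDeriv pd1
  have pφ1 : Function.Periodic φ1 (2*Real.pi) := perDeriv hφp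
  have pφ2 : Function.Periodic φ2 (2*Real.pi) := perDeriv pφ1
  have hit2 : iteratedDeriv 2 d = d2 := by
    rw [iteratedDeriv_succ, iteratedDeriv_one]
  have hit3 : iteratedDeriv 3 d = d3 := by
    rw [iteratedDeriv_succ, iteratedDeriv_succ, iteratedDeriv_one]
  have hitφ2 : iteratedDeriv 2 φ = φ2 := by
    rw [iteratedDeriv_succ, iteratedDeriv_one]
  set g : ℝ → ℝ := fun x => d1 x * φ1 x with hg
  have sg : ContDiff ℝ ∞ g := sd1.mul sφ1
  have pg : Function.Periodic g (2*Real.pi) := by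
    intro x; simp only [hg]; rw [pd1 x, pφ1 x]
  have sg1 : ContDiff ℝ ∞ (deriv g) := cdDeriv sg
  have pg1 : Function.Periodic (deriv g) (2*Real.pi) := perDeriv pg
  have hitg2 : iteratedDeriv 2 g = deriv (deriv g) := by
    rw [iteratedDeriv_succ, iteratedDeriv_one]
  have hgder : ∀ x, deriv g x = d2 x * φ1 x + d1 x * φ2 x := by
    intro x
    have h1 : DifferentiableAt ℝ d1 x := sd1.differentiable (by norm_num) x
    have h2 : DifferentiableAt ℝ φ1 x := sφ1.differentiable (by norm_num) x
    rw [hg]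
    rw [deriv_fun_mul h1 h2]
  -- IBP step 1
  have step1 : (∫ x in (0:ℝ)..(2*Real.pi), d2 x * deriv (deriv g) x)
      = - ∫ x in (0:ℝ)..(2*Real.pi), d3 x * deriv g x :=
    ibp_s12 d2 (deriv g) sd2 sg1 pd2 pg1
  -- split
  have step2 : (∫ x in (0:ℝ)..(2*Real.pi), d3 x * deriv g x)
      = (∫ x in (0:ℝ)..(2*Real.pi), d3 x * (d2 x * φ1 x))
        + ∫ x in (0:ℝ)..(2*Real.pi), d3 x * (d1 x * φ2 x) := by
    rw [← intervalIntegral.integral_add (f := fun x => d3 x * (d2 x * φ1 x)) (g := fun x => d3 x * (d1 x * φ2 x))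
      ((sd3.continuous.mul (sd2.continuous.mul sφ1.continuous)).intervalIntegrable _ _)
      ((sd3.continuous.mul (sd1.continuous.mul sφ2.continuous)).intervalIntegrable _ _)]
    apply intervalIntegral.integral_congr
    intro x _
    show d3 x * deriv g x = d3 x * (d2 x * φ1 x) + d3 x * (d1 x * φ2 x)
    rw [hgder x]; ring
  -- IBP step 3
  have step3 : (∫ x in (0:ℝ)..(2*Real.pi), d3 x * (d2 x * φ1 x))
      = -(1/2) * ∫ x in (0:ℝ)..(2*Real.pi), (d2 x)^2 * φ2 x := by
    set h : ℝ → ℝ := fun x => (d2 x)^2 with hh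
    have sh : ContDiff ℝ ∞ h := sd2.pow 2
    have ph : Function.Periodic h (2*Real.pi) := by
      intro x; simp only [hh]; rw [pd2 x]
    have hder : ∀ x, deriv h x = 2 * d2 x * d3 x := by
      intro x
      have hda := ((sd2.differentiable (by norm_num) x).hasDerivAt).pow 2
      have := hda.deriv
      rw [show deriv h x = deriv (d2 ^ 2) x from rfl, this]; push_cast; ring
    have hibp := ibp_s12 h φ1 sh sφ1 ph pφ1
    have e2 : (∫ x in (0:ℝ)..(2*Real.pi), deriv h x * φ1 x)
        = ∫ x in (0:ℝ)..(2*Real.pi), 2 * (d3 x * (d2 x * φ1 x)) := by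
      apply intervalIntegral.integral_congr
      intro x _
      show deriv h x * φ1 x = 2 * (d3 x * (d2 x * φ1 x))
      rw [hder x]; ring
    rw [e2, intervalIntegral.integral_const_mul] at hibp
    have e1 : (∫ x in (0:ℝ)..(2*Real.pi), h x * deriv φ1 x)
        = ∫ x in (0:ℝ)..(2*Real.pi), (d2 x)^2 * φ2 x := rfl
    rw [e1] at hibp
    linarith
  -- notation for norms
  set a := L2norm d3 with ha
  set b := L2norm d1 with hb
  set M := supNorm φ2 with hM
  have hann : 0 ≤ a := Real.sqrt_nonneg _
  have hbnn : 0 ≤ b := Real.sqrt_nonneg _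
  -- sup norm bound
  have hMb : ∀ x ∈ Set.Icc (0:ℝ) (2*Real.pi), |φ2 x| ≤ M := by
    intro x hx
    apply le_csSup
    · exact (isCompact_Icc.image (sφ2.continuous.abs)).bddAbove
    · exact Set.mem_image_of_mem _ hx
  have hMnn : 0 ≤ M := le_trans (abs_nonneg _) (hMb 0 (by constructor <;> [rfl; positivity]))
  -- ∫ d2² ≤ a * b
  have hd2sq : (∫ x in (0:ℝ)..(2*Real.pi), (d2 x)^2) ≤ a * b := by
    have hibp := ibp_s12 d1 d2 sd1 sd2 pd1 pd2
    have e : (∫ x in (0:ℝ)..(2*Real.pi), deriv d1 x * d2 x)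
        = ∫ x in (0:ℝ)..(2*Real.pi), (d2 x)^2 := by
      apply intervalIntegral.integral_congr
      intro x _
      show deriv d1 x * d2 x = (d2 x)^2
      rw [← hd2]; ring
    rw [e] at hibp
    have hcs := cs d1 d3 sd1.continuous sd3.continuous
    have hibp' : (∫ x in (0:ℝ)..(2*Real.pi), d1 x * d3 x)
        = -∫ x in (0:ℝ)..(2*Real.pi), (d2 x)^2 := hibp
    have h4 := neg_le_abs (∫ x in (0:ℝ)..(2*Real.pi), d1 x * d3 x)
    rw [← hb, ← ha] at hcs
    nlinarith [hcs, h4, hibp']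
  -- bound |T|
  have hT : |∫ x in (0:ℝ)..(2*Real.pi), (d2 x)^2 * φ2 x| ≤ M * (a * b) := by
    have h1 : |∫ x in (0:ℝ)..(2*Real.pi), (d2 x)^2 * φ2 x|
        ≤ ∫ x in (0:ℝ)..(2*Real.pi), |(d2 x)^2 * φ2 x| := by
      exact intervalIntegral.abs_integral_le_integral_abs hpi
    have h2 : (∫ x in (0:ℝ)..(2*Real.pi), |(d2 x)^2 * φ2 x|)
        ≤ ∫ x in (0:ℝ)..(2*Real.pi), M * (d2 x)^2 := by
      apply intervalIntegral.integral_mono_on hpi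
      · exact ((sd2.continuous.pow 2).mul sφ2.continuous).abs.intervalIntegrable _ _
      · exact (continuous_const.mul (sd2.continuous.pow 2)).intervalIntegrable _ _
      · intro x hx
        rw [abs_mul, abs_pow, sq_abs]
        calc (d2 x)^2 * |φ2 x| ≤ (d2 x)^2 * M :=
              mul_le_mul_of_nonneg_left (hMb x hx) (sq_nonneg _)
          _ = M * (d2 x)^2 := mul_comm _ _
    rw [intervalIntegral.integral_const_mul] at h2
    calc |∫ x in (0:ℝ)..(2*Real.pi), (d2 x)^2 * φ2 x|
        ≤ M * ∫ x in (0:ℝ)..(2*Real.pi), (d2 x)^2 := le_trans h1 h2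
      _ ≤ M * (a * b) := mul_le_mul_of_nonneg_left hd2sq hMnn
  -- bound |S2|
  have hS2 : |∫ x in (0:ℝ)..(2*Real.pi), d3 x * (d1 x * φ2 x)| ≤ M * (a * b) := by
    have h1 : |∫ x in (0:ℝ)..(2*Real.pi), d3 x * (d1 x * φ2 x)|
        ≤ ∫ x in (0:ℝ)..(2*Real.pi), |d3 x * (d1 x * φ2 x)| :=
      intervalIntegral.abs_integral_le_integral_abs hpi
    have h2 : (∫ x in (0:ℝ)..(2*Real.pi), |d3 x * (d1 x * φ2 x)|)
        ≤ ∫ x in (0:ℝ)..(2*Real.pi), M * (|d3 x| * |d1 x|) := by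
      apply intervalIntegral.integral_mono_on hpi
      · exact (sd3.continuous.mul (sd1.continuous.mul sφ2.continuous)).abs.intervalIntegrable _ _
      · exact (continuous_const.mul
          (sd3.continuous.abs.mul sd1.continuous.abs)).intervalIntegrable _ _
      · intro x hx
        rw [abs_mul, abs_mul]
        calc |d3 x| * (|d1 x| * |φ2 x|) ≤ |d3 x| * (|d1 x| * M) := by
              apply mul_le_mul_of_nonneg_left _ (abs_nonneg _)
              exact mul_le_mul_of_nonneg_left (hMb x hx) (abs_nonneg _)
          _ = M * (|d3 x| * |d1 x|) := by ring
    rw [intervalIntegral.integral_const_mul] at h2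
    have hcs := cs (fun x => |d3 x|) (fun x => |d1 x|)
      sd3.continuous.abs sd1.continuous.abs
    have e3 : L2norm (fun x => |d3 x|) = a := by
      rw [L2norm, ha, L2norm]
      congr 1
      apply intervalIntegral.integral_congr
      intro x _; exact sq_abs _
    have e1 : L2norm (fun x => |d1 x|) = b := by
      rw [L2norm, hb, L2norm]
      congr 1
      apply intervalIntegral.integral_congr
      intro x _; exact sq_abs _
    rw [e3, e1] at hcs
    have h3 : (∫ x in (0:ℝ)..(2*Real.pi), |d3 x| * |d1 x|) ≤ a * b :=
      le_trans (le_abs_self _) hcs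
    calc |∫ x in (0:ℝ)..(2*Real.pi), d3 x * (d1 x * φ2 x)|
        ≤ M * ∫ x in (0:ℝ)..(2*Real.pi), |d3 x| * |d1 x| := le_trans h1 h2
      _ ≤ M * (a * b) := mul_le_mul_of_nonneg_left h3 hMnn
  -- combine
  rw [hit2, hit3, hitφ2, L2inner]
  have hfun : (iteratedDeriv 2 fun x => deriv d x * deriv φ x) = deriv (deriv g) := by
    rw [← hitg2]
  rw [hfun]
  have hval : (∫ x in (0:ℝ)..(2*Real.pi), d2 x * deriv (deriv g) x)
      = (1/2) * (∫ x in (0:ℝ)..(2*Real.pi), (d2 x)^2 * φ2 x)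
        - ∫ x in (0:ℝ)..(2*Real.pi), d3 x * (d1 x * φ2 x) := by
    rw [step1, step2, step3]; ring
  rw [hval]
  have habs : |2 * ((1/2) * (∫ x in (0:ℝ)..(2*Real.pi), (d2 x)^2 * φ2 x)
        - ∫ x in (0:ℝ)..(2*Real.pi), d3 x * (d1 x * φ2 x))|
      ≤ 3 * M * (a * b) := by
    have := abs_sub (∫ x in (0:ℝ)..(2*Real.pi), (d2 x)^2 * φ2 x)
      (2 * ∫ x in (0:ℝ)..(2*Real.pi), d3 x * (d1 x * φ2 x))
    calc |2 * ((1/2) * (∫ x in (0:ℝ)..(2*Real.pi), (d2 x)^2 * φ2 x)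
          - ∫ x in (0:ℝ)..(2*Real.pi), d3 x * (d1 x * φ2 x))|
        = |(∫ x in (0:ℝ)..(2*Real.pi), (d2 x)^2 * φ2 x)
            - 2 * ∫ x in (0:ℝ)..(2*Real.pi), d3 x * (d1 x * φ2 x)| := by
          congr 1; ring
      _ ≤ |∫ x in (0:ℝ)..(2*Real.pi), (d2 x)^2 * φ2 x|
            + |2 * ∫ x in (0:ℝ)..(2*Real.pi), d3 x * (d1 x * φ2 x)| := abs_sub _ _
      _ ≤ M * (a * b) + 2 * (M * (a * b)) := by
          have h5 : |2 * ∫ x in (0:ℝ)..(2*Real.pi), d3 x * (d1 x * φ2 x)|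
              = 2 * |∫ x in (0:ℝ)..(2*Real.pi), d3 x * (d1 x * φ2 x)| := by
            rw [abs_mul]; norm_num
          rw [h5]
          exact add_le_add hT (by linarith [hS2])
      _ = 3 * M * (a * b) := by ring
  refine le_trans habs ?_
  -- final AM-GM
  have ht : (9/(4*ε)) * (4*ε) = 9 := div_mul_cancel₀ _ (by positivity)
  nlinarith [sq_nonneg (2*ε*a - 3*M*b), mul_pos hε hε, hε, hMnn, hann, hbnn,
    mul_nonneg hMnn hbnn, mul_nonneg hann hbnn,
    mul_nonneg (mul_nonneg hMnn hMnn) (mul_nonneg hbnn hbnn)]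
end

section
/- Let d be a smooth 2π-periodic function with zero mean and let ε > 0. Then |⟨d_xx, ((d_x)²)_xx⟩| ≤ ε ‖d_xxx‖² + (1/4) · ((4/7)ε)^{−7} · ‖d_x‖^{10}. -/
open MeasureTheory Real Filter intervalIntegral
open scoped ContDiff

lemma periodic_deriv'_s13 {f : ℝ → ℝ} {c : ℝ} (h : Function.Periodic f c) :
    Function.Periodic (deriv f) c := by
  intro x
  have hfe : (fun y => f (y + c)) = f := funext h
  calc deriv f (x + c) = deriv (fun y => f (y + c)) x := (deriv_comp_add_const f c x).symm
    _ = deriv f x := by rw [hfe]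

lemma key0 (F G : ℝ → ℝ) (hFG : ∀ x, HasDerivAt F (G x) x) (hG : Continuous G)
    (hp : Function.Periodic F (2*Real.pi)) : ∫ x in (0:ℝ)..(2*Real.pi), G x = 0 := by
  rw [intervalIntegral.integral_eq_sub_of_hasDerivAt (fun x _ => hFG x)
    (hG.intervalIntegrable _ _)]
  have := hp 0
  simp only [zero_add] at this
  rw [this, sub_self]

lemma cs_interval (f g : ℝ → ℝ) (hf : Continuous f) (hg : Continuous g) :
    (∫ x in (0:ℝ)..(2*Real.pi), |f x| * |g x|) ≤
      Real.sqrt (∫ x in (0:ℝ)..(2*Real.pi), (f x)^2) *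
      Real.sqrt (∫ x in (0:ℝ)..(2*Real.pi), (g x)^2) := by
  set A := ∫ x in (0:ℝ)..(2*Real.pi), (f x)^2 with hA
  set B := ∫ x in (0:ℝ)..(2*Real.pi), |f x| * |g x| with hB
  set C := ∫ x in (0:ℝ)..(2*Real.pi), (g x)^2 with hC
  have h2pi : (0:ℝ) ≤ 2*Real.pi := by positivity
  have hif : IntervalIntegrable (fun x => (f x)^2) volume 0 (2*Real.pi) :=
    ((hf.pow 2).intervalIntegrable _ _)
  have hig : IntervalIntegrable (fun x => (g x)^2) volume 0 (2*Real.pi) :=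
    ((hg.pow 2).intervalIntegrable _ _)
  have hifg : IntervalIntegrable (fun x => |f x| * |g x|) volume 0 (2*Real.pi) :=
    ((hf.abs.mul hg.abs).intervalIntegrable _ _)
  have hA0 : 0 ≤ A := intervalIntegral.integral_nonneg h2pi (fun x _ => sq_nonneg _)
  have hB0 : 0 ≤ B := intervalIntegral.integral_nonneg h2pi
    (fun x _ => mul_nonneg (abs_nonneg _) (abs_nonneg _))
  have hC0 : 0 ≤ C := intervalIntegral.integral_nonneg h2pi (fun x _ => sq_nonneg _)
  have key : ∀ t : ℝ, 0 ≤ A * (t * t) + (2*B) * t + C := by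
    intro t
    have expand : (∫ x in (0:ℝ)..(2*Real.pi), (t * |f x| + |g x|)^2)
        = A * (t*t) + (2*B) * t + C := by
      have : ∀ x : ℝ, (t * |f x| + |g x|)^2
          = (t*t) * (f x)^2 + (2*t) * (|f x| * |g x|) + (g x)^2 := by
        intro x
        rw [← sq_abs (f x), ← sq_abs (g x)]
        ring
      rw [intervalIntegral.integral_congr (fun x _ => this x)]
      rw [intervalIntegral.integral_add (((hif.const_mul _).add (hifg.const_mul _)))
        hig, intervalIntegral.integral_add (hif.const_mul _) (hifg.const_mul _),
        intervalIntegral.integral_const_mul, intervalIntegral.integral_const_mul]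
      ring
    rw [← expand]
    exact intervalIntegral.integral_nonneg h2pi (fun x _ => sq_nonneg _)
  have hdisc := discrim_le_zero key
  rw [discrim] at hdisc
  have hBAC : B^2 ≤ A * C := by nlinarith
  calc B = Real.sqrt (B^2) := by rw [Real.sqrt_sq hB0]
    _ ≤ Real.sqrt (A * C) := Real.sqrt_le_sqrt hBAC
    _ = Real.sqrt A * Real.sqrt C := Real.sqrt_mul hA0 C

lemma young' (Iv b c ε K : ℝ) (hI : 0 ≤ Iv) (hb : 0 ≤ b) (hc : 0 ≤ c) (hε : 0 < ε)
    (hK : 2 ≤ K * ε^7) (h4 : Iv^4 ≤ 4*c^5*b^7) : Iv ≤ ε*b^2 + K*c^10 := by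
  have hε7 : (0:ℝ) < ε^7 := by positivity
  have hK0 : 0 < K := by nlinarith
  set x := ε * b^2 with hx
  set y := K * c^10 with hy
  have hx0 : 0 ≤ x := by positivity
  have hy0 : 0 ≤ y := by positivity
  have h8 : Iv^8 ≤ 8 * x^7 * y := by
    have h1 : Iv^8 ≤ 16 * c^10 * b^14 := by nlinarith [pow_nonneg hI 4]
    have h2 : 16 * c^10 * b^14 ≤ 8 * x^7 * y := by
      have : 8 * x^7 * y = 8 * (ε^7 * K) * (b^14 * c^10) := by rw [hx, hy]; ring
      rw [this]
      nlinarith [mul_nonneg (pow_nonneg hb 14) (pow_nonneg hc 10), hε7.le]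
    linarith
  have hbin : 8 * x^7 * y ≤ (x + y)^8 := by
    have s2 : x^2 + 2*x*y ≤ (x+y)^2 := by nlinarith
    have s4 : x^4 + 4*x^3*y ≤ (x+y)^4 := by nlinarith [sq_nonneg (x+y), mul_nonneg hx0 hy0, sq_nonneg x]
    have t0 : 0 ≤ x^4 + 4*x^3*y := by positivity
    have t1 : (x^4 + 4*x^3*y)^2 ≤ ((x+y)^4)^2 := pow_le_pow_left₀ t0 s4 2
    have s8 : x^8 + 8*x^7*y ≤ (x+y)^8 := by
      nlinarith [mul_nonneg (pow_nonneg hx0 6) (sq_nonneg y)]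
    nlinarith [pow_nonneg hx0 8]
  have : Iv^8 ≤ (x+y)^8 := le_trans h8 hbin
  exact le_of_pow_le_pow_left₀ (by norm_num) (add_nonneg hx0 hy0) this

/-- |⟨d_xx, ((d_x)²)_xx⟩| ≤ ε‖d_xxx‖² + (1/4)·((4/7)ε)⁻⁷·‖d_x‖¹⁰. -/
theorem stmt13 (d : ℝ → ℝ) (hd : InH d) (ε : ℝ) (hε : 0 < ε) :
    |L2inner (iteratedDeriv 2 d) (iteratedDeriv 2 (fun x => (deriv d x)^2))| ≤
      ε * (L2norm (iteratedDeriv 3 d))^2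
      + (1/4) * ((4/7) * ε)^(-7 : ℤ) * (L2norm (deriv d))^10 := by
  obtain ⟨hds, hdp, -⟩ := hd
  set u := deriv d with hu_def
  set v := deriv u with hv_def
  set w := deriv v with hw_def
  have hds' : ContDiff ℝ (∞ : WithTop ℕ∞) d := hds.of_le (by simp)
  have hus : ContDiff ℝ (∞ : WithTop ℕ∞) u := (contDiff_infty_iff_deriv.mp hds').2
  have hvs : ContDiff ℝ (∞ : WithTop ℕ∞) v := (contDiff_infty_iff_deriv.mp hus).2
  have hws : ContDiff ℝ (∞ : WithTop ℕ∞) w := (contDiff_infty_iff_deriv.mp hvs).2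
  have cu : Continuous u := hus.continuous
  have cv : Continuous v := hvs.continuous
  have cw : Continuous w := hws.continuous
  have huv : ∀ x, HasDerivAt u (v x) x := fun x => ((contDiff_infty_iff_deriv.mp hus).1 x).hasDerivAt
  have hvw : ∀ x, HasDerivAt v (w x) x := fun x => ((contDiff_infty_iff_deriv.mp hvs).1 x).hasDerivAt
  have hup : Function.Periodic u (2*Real.pi) := periodic_deriv'_s13 hdp
  have hvp : Function.Periodic v (2*Real.pi) := periodic_deriv'_s13 hup
  have h2pi0 : (0:ℝ) ≤ 2*Real.pi := by positivity
  have hid2 : iteratedDeriv 2 d = v := by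
    rw [iteratedDeriv_succ, iteratedDeriv_one]
  have hid3 : iteratedDeriv 3 d = w := by
    rw [iteratedDeriv_succ, hid2]
  -- second derivative of u^2
  have hsq1 : deriv (fun x => (u x)^2) = fun x => 2 * u x * v x := by
    funext x
    have h : HasDerivAt (fun x => (u x)^2) (2 * u x * v x) x := by
      have := (huv x).pow 2
      exact this.congr_deriv (by norm_num)
    exact h.deriv
  have hsq : iteratedDeriv 2 (fun x => (u x)^2) = fun x => 2 * v x * v x + 2 * u x * w x := by
    rw [show (2:ℕ) = 1 + 1 from rfl, iteratedDeriv_succ, iteratedDeriv_one, hsq1]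
    funext x
    have h : HasDerivAt (fun x => 2 * u x * v x) (2 * v x * v x + 2 * u x * w x) x := by
      have h1 : HasDerivAt (fun x => 2 * u x) (2 * v x) x := (huv x).const_mul 2
      exact h1.mul (hvw x)
    exact h.deriv
  -- the key identity: L2inner = ∫ v³
  have hzero1 : ∫ x in (0:ℝ)..(2*Real.pi), ((v x)^3 + 2 * u x * v x * w x) = 0 := by
    apply key0 (fun x => u x * (v x)^2)
    · intro x
      have h1 : HasDerivAt (fun x => (v x)^2) (2 * v x * w x) x := by
        have := (hvw x).pow 2
        exact this.congr_deriv (by norm_num)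
      have := (huv x).mul h1
      exact this.congr_deriv (by ring)
    · fun_prop
    · intro x
      simp only [hup x, hvp x]
  have int1 : IntervalIntegrable (fun x => (v x)^3) volume 0 (2*Real.pi) :=
    ((cv.pow 3).intervalIntegrable _ _)
  have int2 : IntervalIntegrable (fun x => (v x)^3 + 2 * u x * v x * w x) volume 0 (2*Real.pi) :=
    (by fun_prop : Continuous fun x => (v x)^3 + 2 * u x * v x * w x).intervalIntegrable _ _
  have hI : L2inner (iteratedDeriv 2 d) (iteratedDeriv 2 (fun x => (u x)^2))
      = ∫ x in (0:ℝ)..(2*Real.pi), (v x)^3 := by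
    unfold L2inner
    rw [hid2, hsq]
    calc (∫ x in (0:ℝ)..(2*Real.pi), v x * (2 * v x * v x + 2 * u x * w x))
        = ∫ x in (0:ℝ)..(2*Real.pi), ((v x)^3 + ((v x)^3 + 2 * u x * v x * w x)) :=
          intervalIntegral.integral_congr (fun x _ => by ring)
      _ = (∫ x in (0:ℝ)..(2*Real.pi), (v x)^3)
          + ∫ x in (0:ℝ)..(2*Real.pi), ((v x)^3 + 2 * u x * v x * w x) :=
          intervalIntegral.integral_add int1 int2
      _ = ∫ x in (0:ℝ)..(2*Real.pi), (v x)^3 := by rw [hzero1, add_zero]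
  -- norms
  set a := L2norm v with ha_def
  set b := L2norm w with hb_def
  set c := L2norm u with hc_def
  have ha : a = Real.sqrt (∫ x in (0:ℝ)..(2*Real.pi), (v x)^2) := rfl
  have hb : b = Real.sqrt (∫ x in (0:ℝ)..(2*Real.pi), (w x)^2) := rfl
  have hc : c = Real.sqrt (∫ x in (0:ℝ)..(2*Real.pi), (u x)^2) := rfl
  have ha0 : 0 ≤ a := by rw [ha]; exact Real.sqrt_nonneg _
  have hb0 : 0 ≤ b := by rw [hb]; exact Real.sqrt_nonneg _
  have hc0 : 0 ≤ c := by rw [hc]; exact Real.sqrt_nonneg _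
  have hIv2 : (0:ℝ) ≤ ∫ x in (0:ℝ)..(2*Real.pi), (v x)^2 :=
    intervalIntegral.integral_nonneg h2pi0 (fun x _ => sq_nonneg _)
  have ha2 : a^2 = ∫ x in (0:ℝ)..(2*Real.pi), (v x)^2 := by
    rw [ha]; exact Real.sq_sqrt hIv2
  -- Rolle: a zero of v
  have hu2pi : u 0 = u (2*Real.pi) := by
    have := hup 0
    simp only [zero_add] at this
    exact this.symm
  obtain ⟨x₀, hx₀Ioo, hvx₀⟩ :=
    exists_deriv_eq_zero (by positivity : (0:ℝ) < 2*Real.pi) cu.continuousOn hu2pi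
  have hv0 : v x₀ = 0 := hvx₀
  have hx₀Icc : x₀ ∈ Set.Icc (0:ℝ) (2*Real.pi) := Set.Ioo_subset_Icc_self hx₀Ioo
  -- pointwise bounds for the integrand 2 v w
  have hgabs : ∀ t : ℝ, 2 * v t * w t ≤ 2 * (|v t| * |w t|) := by
    intro t
    have h1 : v t * w t ≤ |v t| * |w t| := by
      rw [← abs_mul]; exact le_abs_self _
    linarith
  have hgabs' : ∀ t : ℝ, -(2 * v t * w t) ≤ 2 * (|v t| * |w t|) := by
    intro t
    have h1 : -(v t * w t) ≤ |v t| * |w t| := by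
      rw [← abs_mul]; exact neg_le_abs _
    linarith
  have intg : ∀ p q : ℝ, IntervalIntegrable (fun t => 2 * v t * w t) volume p q :=
    fun p q => (by fun_prop : Continuous fun t => 2 * v t * w t).intervalIntegrable _ _
  have intgabs : ∀ p q : ℝ, IntervalIntegrable (fun t => 2 * (|v t| * |w t|)) volume p q :=
    fun p q => (by fun_prop : Continuous fun t => 2 * (|v t| * |w t|)).intervalIntegrable _ _
  have hCS : (∫ t in (0:ℝ)..(2*Real.pi), 2 * (|v t| * |w t|)) ≤ 2 * (a * b) := by
    rw [intervalIntegral.integral_const_mul]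
    have := cs_interval v w cv cw
    rw [← ha, ← hb] at this
    linarith
  -- Agmon inequality
  have agmon : ∀ x ∈ Set.Icc (0:ℝ) (2*Real.pi), (v x)^2 ≤ 2 * (a * b) := by
    intro x hx
    have ftc : ∫ t in x₀..x, 2 * v t * w t = (v x)^2 - (v x₀)^2 := by
      apply intervalIntegral.integral_eq_sub_of_hasDerivAt (f := fun t => (v t)^2)
      · intro t _
        have := (hvw t).pow 2
        exact this.congr_deriv (by norm_num)
      · exact intg _ _
    have hvx2 : (v x)^2 = ∫ t in x₀..x, 2 * v t * w t := by
      rw [ftc, hv0]; ring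
    have habs : (v x)^2 ≤ ∫ t in (0:ℝ)..(2*Real.pi), 2 * (|v t| * |w t|) := by
      rcases le_total x₀ x with h | h
      · calc (v x)^2 = ∫ t in x₀..x, 2 * v t * w t := hvx2
          _ ≤ ∫ t in x₀..x, 2 * (|v t| * |w t|) :=
            intervalIntegral.integral_mono_on h (intg _ _) (intgabs _ _)
              (fun t _ => hgabs t)
          _ ≤ ∫ t in (0:ℝ)..(2*Real.pi), 2 * (|v t| * |w t|) :=
            intervalIntegral.integral_mono_interval hx₀Icc.1 h hx.2
              (Filter.Eventually.of_forall (fun t => by positivity)) (intgabs _ _)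
      · calc (v x)^2 = -∫ t in x..x₀, 2 * v t * w t := by
              rw [hvx2, ← intervalIntegral.integral_symm]
          _ = ∫ t in x..x₀, -(2 * v t * w t) := by
              rw [intervalIntegral.integral_neg]
          _ ≤ ∫ t in x..x₀, 2 * (|v t| * |w t|) :=
            intervalIntegral.integral_mono_on h ((intg _ _).neg) (intgabs _ _)
              (fun t _ => hgabs' t)
          _ ≤ ∫ t in (0:ℝ)..(2*Real.pi), 2 * (|v t| * |w t|) :=
            intervalIntegral.integral_mono_interval hx.1 h hx₀Icc.2
              (Filter.Eventually.of_forall (fun t => by positivity)) (intgabs _ _)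
    linarith
  -- sup bound
  set M := Real.sqrt (2 * (a * b)) with hM_def
  have hab0 : (0:ℝ) ≤ 2 * (a * b) := by positivity
  have hM0 : 0 ≤ M := Real.sqrt_nonneg _
  have hM2 : M^2 = 2 * (a * b) := Real.sq_sqrt hab0
  have hvM : ∀ x ∈ Set.Icc (0:ℝ) (2*Real.pi), |v x| ≤ M := by
    intro x hx
    have h1 : |v x| = Real.sqrt ((v x)^2) := (Real.sqrt_sq_eq_abs _).symm
    rw [h1]
    exact Real.sqrt_le_sqrt (agmon x hx)
  -- bound the cubic integral
  have hIbound : |∫ x in (0:ℝ)..(2*Real.pi), (v x)^3| ≤ M * a^2 := by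
    calc |∫ x in (0:ℝ)..(2*Real.pi), (v x)^3|
        ≤ ∫ x in (0:ℝ)..(2*Real.pi), |(v x)^3| :=
          intervalIntegral.abs_integral_le_integral_abs h2pi0
      _ ≤ ∫ x in (0:ℝ)..(2*Real.pi), M * (v x)^2 := by
          apply intervalIntegral.integral_mono_on h2pi0
            ((by fun_prop : Continuous fun x => |(v x)^3|).intervalIntegrable _ _)
            ((by fun_prop : Continuous fun x => M * (v x)^2).intervalIntegrable _ _)
          intro x hx
          have e : |(v x)^3| = |v x| * (v x)^2 := by
            rw [abs_pow, ← sq_abs]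
            ring
          rw [e]
          exact mul_le_mul_of_nonneg_right (hvM x hx) (sq_nonneg _)
      _ = M * ∫ x in (0:ℝ)..(2*Real.pi), (v x)^2 := intervalIntegral.integral_const_mul _ _
      _ = M * a^2 := by rw [ha2]
  -- IBP: a² ≤ c b
  have hacb : a^2 ≤ c * b := by
    have hzero2 : ∫ x in (0:ℝ)..(2*Real.pi), ((v x)^2 + u x * w x) = 0 := by
      apply key0 (fun x => u x * v x)
      · intro x
        have := (huv x).mul (hvw x)
        exact this.congr_deriv (by ring)
      · fun_prop
      · intro x
        simp only [hup x, hvp x]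
    have hsplit : (∫ x in (0:ℝ)..(2*Real.pi), (v x)^2)
        + ∫ x in (0:ℝ)..(2*Real.pi), u x * w x = 0 := by
      rw [← intervalIntegral.integral_add (f := fun x => (v x)^2) (g := fun x => u x * w x) ((cv.pow 2).intervalIntegrable _ _)
        ((cu.mul cw).intervalIntegrable _ _)]
      exact hzero2
    have hneg : (∫ x in (0:ℝ)..(2*Real.pi), (v x)^2)
        = ∫ x in (0:ℝ)..(2*Real.pi), -(u x * w x) := by
      rw [intervalIntegral.integral_neg]; linarith
    have hle : (∫ x in (0:ℝ)..(2*Real.pi), -(u x * w x))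
        ≤ ∫ x in (0:ℝ)..(2*Real.pi), |u x| * |w x| := by
      apply intervalIntegral.integral_mono_on h2pi0
        (((cu.mul cw).neg).intervalIntegrable _ _)
        ((cu.abs.mul cw.abs).intervalIntegrable _ _)
      intro x _
      show -(u x * w x) ≤ |u x| * |w x|
      rw [← abs_mul]
      exact neg_le_abs _
    have hcs := cs_interval u w cu cw
    rw [← hc, ← hb] at hcs
    rw [← ha2] at hneg
    linarith
  -- final assembly
  rw [hI, hid3]
  set Iv := |∫ x in (0:ℝ)..(2*Real.pi), (v x)^3| with hIv_def
  have hIv0 : 0 ≤ Iv := abs_nonneg _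
  have h4 : Iv^4 ≤ 4 * c^5 * b^7 := by
    have h1 : Iv^4 ≤ (M * a^2)^4 := pow_le_pow_left₀ hIv0 hIbound 4
    have h2 : (M * a^2)^4 = 4 * (a^2)^5 * b^2 := by
      have e : (M * a^2)^4 = (M^2)^2 * (a^2)^4 := by ring
      rw [e, hM2]; ring
    have h3 : (a^2)^5 ≤ (c*b)^5 := pow_le_pow_left₀ (by positivity) hacb 5
    have h5 : 4 * (a^2)^5 * b^2 ≤ 4 * (c*b)^5 * b^2 := by nlinarith [sq_nonneg b]
    have h6 : 4 * (c*b)^5 * b^2 = 4 * c^5 * b^7 := by ring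
    linarith
  have hK : 2 ≤ ((1:ℝ)/4 * ((4/7) * ε)^(-7 : ℤ)) * ε^7 := by
    have h7 : ((4/7) * ε)^(-7 : ℤ) = (((4/7) * ε)^(7:ℕ))⁻¹ := by
      rw [zpow_neg]
      norm_cast
    have hεne : ε ≠ 0 := ne_of_gt hε
    have heq : ((1:ℝ)/4 * (((4/7)*ε)^(7:ℕ))⁻¹) * ε^7 = 823543/65536 := by
      field_simp
      ring
    rw [h7, heq]
    norm_num
  exact young' Iv b c ε _ hIv0 hb0 hc0 hε hK h4
end
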